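/- arXiv:2401.03042 — 8 statements merged into one kernel-verified Lean document; each statement's English description precedes it below -/
import Mathlib

section
/- Let A_k be any k-atom and let s be a seed of A_k. Then the binomial tree T_k is isomorphic to a subgraph of the path tree T(A_k, s); moreover T_k is isomorphic to the whole path tree T(A_k, s) if and only if A_k is isomorphic to T_k. -/
/-- `IsKAtomSeed k G s` : the graph `G` is a `k`-atom which admits a recursive
construction starting from the vertex `s` (i.e. `s` is a seed of the atom). -/
inductive IsKAtomSeed : (k : ℕ) → {V : Type} → SimpleGraph V → V → Prop
  | base {V : Type} (G : SimpleGraph V) (s : V) (h2 : Subsingleton V) :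
      IsKAtomSeed 1 G s
  | step {V : Type} (G : SimpleGraph V) (k : ℕ) (A : Set V) (s : V) (hs : s ∈ A)
      (hA : IsKAtomSeed k (G.induce A) ⟨s, hs⟩)
      (hI : ∀ u v : V, u ∉ A → v ∉ A → ¬ G.Adj u v)
      (hone : ∀ a ∈ A, ∃! b : V, b ∉ A ∧ G.Adj a b)
      (hcov : ∀ b : V, b ∉ A → ∃ a ∈ A, G.Adj a b) :
      IsKAtomSeed (k + 1) G s

/-- The binomial tree `T_k` on `2^(k-1)` vertices: `T_1 = K_1`, and `T_{k+1}` is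
obtained from `T_k` by attaching one new pendant leaf to every vertex.  Concretely,
vertex `j ≠ 0` is joined to the vertex obtained by clearing the highest set bit
of `j`. -/
def binomialTree (k : ℕ) : SimpleGraph (Fin (2 ^ (k - 1))) :=
  SimpleGraph.fromRel fun i j =>
    (j : ℕ) ≠ 0 ∧ (i : ℕ) + 2 ^ Nat.log 2 (j : ℕ) = (j : ℕ)

/-- The path tree `T(G, u)`: its vertices are the paths of `G` starting at `u`
(rooted at the length-`0` path), and two paths are adjacent if and only if one is
obtained from the other by adjoining one edge at the end. -/
def pathTree {V : Type} (G : SimpleGraph V) (u : V) :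
    SimpleGraph (Σ v : V, G.Path u v) :=
  SimpleGraph.fromRel fun p q =>
    ∃ h : G.Adj p.1 q.1, (q.2 : G.Walk u q.1) = (p.2 : G.Walk u p.1).concat h

/-!
Write `H ⊙ K₁` for `H` with a pendant leaf attached to every vertex, so that `T_{k+1} ≅ T_k ⊙ K₁`.
Let the `(k+1)`-atom `G` be built from the `k`-atom `A` with seed `s` and the independent set `I`.
Paths of `A` from `s` are paths of `G`, and each of them extends by the pendant edge from its
endpoint into `I`; together these embed `T(A, s) ⊙ K₁` into `T(G, s)` as an induced subgraph, so
`T_k` embeds into `T(G, s)` by induction.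

This embedding is onto exactly when every vertex of `I` has only one neighbour in `A`: if `b ∈ I`
has two neighbours `x, y ∈ A`, a path of `A` from `s` to one of them avoiding the other, continued
through `b` to the other, is missed. As `|I| ≤ |A|`, a `k`-atom has at most `2^(k-1)` vertices,
with equality iff `I` is perfectly matched to `A` at every stage; then `G` is built exactly like
`T_k` and every embedding above is onto. Conversely, if `T(G, s)` has only `2^(k-1)` vertices,
counting forces the embedding to be onto at every stage.
-/

open SimpleGraph Function

namespace SimpleGraph

variable {W W' : Type*}

/-- The corona `H ⊙ K₁`: `inl` is the copy of `H`, and `inr a` is the leaf attached to `inl a`. -/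
def corona (H : SimpleGraph W) : SimpleGraph (W ⊕ W) where
  Adj
    | .inl a, .inl b => H.Adj a b
    | .inl a, .inr b => a = b
    | .inr a, .inl b => a = b
    | .inr _, .inr _ => False
  symm := ⟨by rintro (a | a) (b | b) h <;> simp_all [H.adj_comm]⟩
  loopless := ⟨by rintro (a | a) h <;> simp_all⟩

variable {H : SimpleGraph W} {H' : SimpleGraph W'}

@[simp] lemma corona_adj_inl_inl {a b : W} : H.corona.Adj (.inl a) (.inl b) ↔ H.Adj a b := .rfl
@[simp] lemma corona_adj_inl_inr {a b : W} : H.corona.Adj (.inl a) (.inr b) ↔ a = b := .rfl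
@[simp] lemma corona_adj_inr_inl {a b : W} : H.corona.Adj (.inr a) (.inl b) ↔ a = b := .rfl
@[simp] lemma corona_adj_inr_inr {a b : W} : ¬ H.corona.Adj (.inr a) (.inr b) := id

def Embedding.corona (f : H ↪g H') : H.corona ↪g H'.corona where
  toEmbedding := f.toEmbedding.sumMap f.toEmbedding
  map_rel_iff' := by rintro (a | a) (b | b) <;> simp [f.injective.eq_iff]

def Iso.corona (e : H ≃g H') : H.corona ≃g H'.corona where
  toEquiv := e.toEquiv.sumCongr e.toEquiv
  map_rel_iff' := by rintro (a | a) (b | b) <;> simp [e.injective.eq_iff, e.map_adj_iff]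

def Iso.ofSubsingleton [Subsingleton W] [Subsingleton W'] (e : W ≃ W') : H ≃g H' where
  toEquiv := e
  map_rel_iff' {a b} := by simp [Subsingleton.elim a b]

end SimpleGraph

lemma two_pow_succ_sub_one {k : ℕ} (hk : 1 ≤ k) :
    2 ^ (k + 1 - 1) = 2 ^ (k - 1) + 2 ^ (k - 1) := by
  rw [← two_mul, ← pow_succ']
  congr 1
  omega

lemma two_pow_log_two_pow_add {m j : ℕ} (hj : j < 2 ^ m) :
    2 ^ Nat.log 2 (2 ^ m + j) = 2 ^ m := by
  rw [Nat.log_eq_of_pow_le_of_lt_pow (m := m) (by omega) (by rw [pow_succ]; omega)]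

lemma binomialTree_adj {k : ℕ} {i j : Fin (2 ^ (k - 1))} :
    (binomialTree k).Adj i j ↔ (i : ℕ) ≠ j ∧
      ((j : ℕ) ≠ 0 ∧ (i : ℕ) + 2 ^ Nat.log 2 j = j ∨
        (i : ℕ) ≠ 0 ∧ (j : ℕ) + 2 ^ Nat.log 2 i = i) := by
  simp [binomialTree, Fin.val_ne_iff]

def binomialTreeOneIso {W : Type*} (H : SimpleGraph W) [Subsingleton W] (w : W) :
    binomialTree 1 ≃g H :=
  have : Subsingleton (Fin (2 ^ (1 - 1))) := Fin.subsingleton_one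
  Iso.ofSubsingleton (equivOfSubsingletonOfSubsingleton (fun _ => w) (fun _ => 0))

/-- The leaf attached to `i` is `2^(k-1) + i`, whose highest bit is `2^(k-1)`. -/
def binomialTreeSuccIso (k : ℕ) (hk : 1 ≤ k) : (binomialTree k).corona ≃g binomialTree (k + 1) where
  toEquiv := finSumFinEquiv.trans (finCongr (two_pow_succ_sub_one hk).symm)
  map_rel_iff' {a b} := by
    rcases a with ⟨i, hi⟩ | ⟨i, hi⟩ <;> rcases b with ⟨j, hj⟩ | ⟨j, hj⟩ <;>
      simp only [Equiv.trans_apply, finSumFinEquiv_apply_left, finSumFinEquiv_apply_right,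
        finCongr_apply, Fin.val_cast, Fin.val_castAdd, Fin.val_natAdd, binomialTree_adj,
        two_pow_log_two_pow_add hi, two_pow_log_two_pow_add hj, corona_adj_inl_inl,
        corona_adj_inl_inr, corona_adj_inr_inl, corona_adj_inr_inr, Fin.ext_iff, iff_false]
    all_goals
      have := Nat.two_pow_pos (Nat.log 2 i)
      have := Nat.two_pow_pos (Nat.log 2 j)
      omega

namespace SimpleGraph

variable {V V' : Type} {G : SimpleGraph V} {G' : SimpleGraph V'} {u : V}

def pathVertices (P : Σ v, G.Path u v) : List V := (P.2 : G.Walk u P.1).support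

lemma fst_mem_pathVertices (P : Σ v, G.Path u v) : P.1 ∈ pathVertices P :=
  Walk.end_mem_support _

lemma eq_of_pathVertices_eq {P Q : Σ v, G.Path u v} (h : pathVertices P = pathVertices Q) :
    P = Q := by
  obtain ⟨v, p, hp⟩ := P
  obtain ⟨w, q, hq⟩ := Q
  obtain rfl : v = w := by
    rw [← p.getLast_support, ← q.getLast_support]
    simp only [pathVertices] at h
    simp [h]
  obtain rfl : p = q := Walk.ext_support h
  rfl

instance [Subsingleton V] : Subsingleton (Σ v, G.Path u v) := by
  constructor
  rintro ⟨v, p⟩ ⟨w, q⟩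
  obtain rfl := Subsingleton.elim u v
  obtain rfl := Subsingleton.elim u w
  rw [Path.loop_eq p, Path.loop_eq q]

instance [Finite V] : Finite (Σ v, G.Path u v) := by
  classical
  have := Fintype.ofFinite V
  infer_instance

lemma pathTree_adj_iff {P Q : Σ v, G.Path u v} :
    (pathTree G u).Adj P Q ↔ P ≠ Q ∧
      ((∃ h : G.Adj P.1 Q.1, (Q.2 : G.Walk u Q.1) = (P.2 : G.Walk u P.1).concat h) ∨
        ∃ h : G.Adj Q.1 P.1, (P.2 : G.Walk u P.1) = (Q.2 : G.Walk u Q.1).concat h) :=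
  fromRel_adj ..

lemma pathTree_adj_fst {P Q : Σ v, G.Path u v} (h : (pathTree G u).Adj P Q) : G.Adj P.1 Q.1 := by
  obtain ⟨-, ⟨h, -⟩ | ⟨h, -⟩⟩ := pathTree_adj_iff.mp h
  exacts [h, h.symm]

lemma exists_adj_concat_iff {P Q : Σ v, G.Path u v} :
    (∃ h : G.Adj P.1 Q.1, (Q.2 : G.Walk u Q.1) = (P.2 : G.Walk u P.1).concat h) ↔
      pathVertices Q = pathVertices P ++ [Q.1] := by
  refine ⟨fun ⟨h, e⟩ => by simp [pathVertices, e], fun e => ?_⟩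
  have hP : (pathVertices P).dropLast ++ [P.1] = pathVertices P := by
    simpa only [pathVertices, Walk.getLast_support] using
      List.dropLast_append_getLast (Walk.support_ne_nil (P.2 : G.Walk u P.1))
  have h : G.Adj P.1 Q.1 := Walk.adj_of_infix_support (p := (Q.2 : G.Walk u Q.1))
    ⟨(pathVertices P).dropLast, [], by rw [← pathVertices, e, ← hP]; simp⟩
  exact ⟨h, Walk.ext_support (by rw [Walk.support_concat]; exact e)⟩

lemma pathTree_adj_iff_vertices {P Q : Σ v, G.Path u v} :
    (pathTree G u).Adj P Q ↔
      pathVertices Q = pathVertices P ++ [Q.1] ∨ pathVertices P = pathVertices Q ++ [P.1] := by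
  rw [pathTree_adj_iff, exists_adj_concat_iff, exists_adj_concat_iff, and_iff_right_iff_imp]
  rintro (h | h) rfl <;> simp at h

def pathConcat (P : Σ v, G.Path u v) {w : V} (h : G.Adj P.1 w) (hw : w ∉ pathVertices P) :
    Σ v, G.Path u v :=
  ⟨w, (P.2 : G.Walk u P.1).concat h, P.2.2.concat hw h⟩

lemma pathVertices_pathConcat (P : Σ v, G.Path u v) {w : V} (h : G.Adj P.1 w)
    (hw : w ∉ pathVertices P) : pathVertices (pathConcat P h hw) = pathVertices P ++ [w] :=
  Walk.support_concat _ _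

lemma pathTree_adj_pathConcat (P : Σ v, G.Path u v) {w : V} (h : G.Adj P.1 w)
    (hw : w ∉ pathVertices P) : (pathTree G u).Adj P (pathConcat P h hw) :=
  pathTree_adj_iff_vertices.mpr (.inl (pathVertices_pathConcat P h hw))

lemma eq_of_pathConcat_eq {P Q : Σ v, G.Path u v} {w w' : V} {h : G.Adj P.1 w}
    {hw : w ∉ pathVertices P} {h' : G.Adj Q.1 w'} {hw' : w' ∉ pathVertices Q}
    (e : pathConcat P h hw = pathConcat Q h' hw') : P = Q := by
  have := congrArg pathVertices e
  rw [pathVertices_pathConcat, pathVertices_pathConcat] at this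
  exact eq_of_pathVertices_eq (List.append_inj' this rfl).1

lemma eq_or_mem_of_adj_pathConcat {P Q : Σ v, G.Path u v} {w : V} {h : G.Adj Q.1 w}
    {hw : w ∉ pathVertices Q} (hadj : (pathTree G u).Adj P (pathConcat Q h hw)) :
    P = Q ∨ w ∈ pathVertices P := by
  rcases pathTree_adj_iff_vertices.mp hadj with e | e <;> rw [pathVertices_pathConcat] at e
  · exact .inl (eq_of_pathVertices_eq (List.append_inj' e rfl).1.symm)
  · exact .inr (by simp [e])

lemma rootedPath_induction {motive : (Σ v, G.Path u v) → Prop} (nil : motive ⟨u, Path.nil⟩)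
    (concat : ∀ P {w} (h : G.Adj P.1 w) (hw : w ∉ pathVertices P), motive P →
      motive (pathConcat P h hw))
    (P : Σ v, G.Path u v) : motive P := by
  obtain ⟨v, p, hp⟩ := P
  induction p using Walk.concatRec with
  | Hnil => exact nil
  | Hconcat p h ih =>
    have hp' := (Walk.concat_isPath_iff h).mp hp
    exact concat ⟨_, p, hp'.1⟩ h hp'.2 (ih nil concat hp'.1)

lemma exists_path_avoiding_or {x y : V} (hx : G.Reachable u x) (hxy : x ≠ y) :
    (∃ p : G.Path u x, y ∉ (p : G.Walk u x).support) ∨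
      ∃ p : G.Path u y, x ∉ (p : G.Walk u y).support := by
  classical
  obtain ⟨p, hp⟩ := hx.exists_isPath
  by_cases hy : y ∈ p.support
  · exact .inr ⟨⟨p.takeUntil y hy, hp.takeUntil hy⟩, p.endpoint_notMem_support_takeUntil hp hy hxy⟩
  · exact .inl ⟨⟨p, hp⟩, hy⟩

def Embedding.mapRootedPath (f : G ↪g G') (P : Σ v, G.Path u v) : Σ v, G'.Path (f u) v :=
  ⟨f P.1, Path.mapEmbedding f P.2⟩

lemma Embedding.mapRootedPath_fst (f : G ↪g G') (P : Σ v, G.Path u v) :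
    (f.mapRootedPath P).1 = f P.1 :=
  rfl

lemma Embedding.pathVertices_mapRootedPath (f : G ↪g G') (P : Σ v, G.Path u v) :
    pathVertices (f.mapRootedPath P) = (pathVertices P).map f :=
  Walk.support_map _ _

def Embedding.pathTree (f : G ↪g G') (u : V) : pathTree G u ↪g pathTree G' (f u) where
  toFun := f.mapRootedPath
  inj' P Q e := eq_of_pathVertices_eq <| List.map_injective_iff.mpr f.injective <| by
    rw [← f.pathVertices_mapRootedPath, e, f.pathVertices_mapRootedPath]
  map_rel_iff' {P Q} := by
    have hinj := List.map_injective_iff.mpr f.injective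
    change (_root_.pathTree G' (f u)).Adj (f.mapRootedPath P) (f.mapRootedPath Q) ↔ _
    simp only [pathTree_adj_iff_vertices, f.pathVertices_mapRootedPath, f.mapRootedPath_fst,
      ← List.map_singleton (f := f), ← List.map_append, hinj.eq_iff]

end SimpleGraph

structure IsAtomStep {V : Type} (G : SimpleGraph V) (A : Set V) : Prop where
  indep : ∀ u v : V, u ∉ A → v ∉ A → ¬ G.Adj u v
  existsUnique_adj : ∀ a ∈ A, ∃! b : V, b ∉ A ∧ G.Adj a b
  exists_adj : ∀ b : V, b ∉ A → ∃ a ∈ A, G.Adj a b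

namespace IsAtomStep

variable {V : Type} {G : SimpleGraph V} {A : Set V} {s : V}

noncomputable def mate (hG : IsAtomStep G A) (a : A) : ↥Aᶜ :=
  ⟨_, (hG.existsUnique_adj a a.2).exists.choose_spec.1⟩

lemma adj_mate (hG : IsAtomStep G A) (a : A) : G.Adj a (hG.mate a) :=
  (hG.existsUnique_adj a a.2).exists.choose_spec.2

lemma mate_eq_of_adj (hG : IsAtomStep G A) {a : A} {b : V} (hb : b ∉ A) (h : G.Adj a b) :
    (hG.mate a : V) = b :=
  (hG.existsUnique_adj a a.2).unique ⟨(hG.mate a).2, hG.adj_mate a⟩ ⟨hb, h⟩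

lemma mate_surjective (hG : IsAtomStep G A) : Surjective hG.mate := by
  rintro ⟨b, hb⟩
  obtain ⟨a, ha, hab⟩ := hG.exists_adj b hb
  exact ⟨⟨a, ha⟩, Subtype.ext (hG.mate_eq_of_adj hb hab)⟩

lemma adj_mate_iff (hG : IsAtomStep G A) (hinj : Injective hG.mate) {a b : A} :
    G.Adj a (hG.mate b) ↔ a = b := by
  refine ⟨fun h => hinj (Subtype.ext ?_), by rintro rfl; exact hG.adj_mate a⟩
  exact hG.mate_eq_of_adj (hG.mate b).2 h

lemma finite_compl (hG : IsAtomStep G A) [Finite A] : Finite ↥Aᶜ :=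
  Finite.of_surjective _ hG.mate_surjective

lemma finite (hG : IsAtomStep G A) [Finite A] : Finite V := by
  classical
  have := hG.finite_compl
  exact Finite.of_equiv _ (Equiv.Set.sumCompl A)

lemma card_eq_card_add_card_compl (hG : IsAtomStep G A) [Finite A] :
    Nat.card V = Nat.card A + Nat.card ↥Aᶜ := by
  classical
  have := hG.finite_compl
  rw [← Nat.card_sum, Nat.card_congr (Equiv.Set.sumCompl A)]

lemma card_compl_le (hG : IsAtomStep G A) [Finite A] : Nat.card ↥Aᶜ ≤ Nat.card A :=
  Nat.card_le_card_of_surjective _ hG.mate_surjective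

lemma injective_mate_iff_card (hG : IsAtomStep G A) [Finite A] :
    Injective hG.mate ↔ Nat.card A = Nat.card ↥Aᶜ := by
  rw [← and_iff_left (a := Injective hG.mate) hG.mate_surjective, ← Bijective,
    Nat.bijective_iff_surjective_and_card, and_iff_right hG.mate_surjective]

open Classical in
noncomputable def coronaIso (hG : IsAtomStep G A) (hinj : Injective hG.mate) :
    (G.induce A).corona ≃g G where
  toEquiv := ((Equiv.refl A).sumCongr (Equiv.ofBijective _ ⟨hinj, hG.mate_surjective⟩)).trans
    (Equiv.Set.sumCompl A)
  map_rel_iff' {a b} := by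
    rcases a with a | a <;> rcases b with b | b <;>
      simp only [Equiv.trans_apply, Equiv.sumCongr_apply, Sum.map_inl, Sum.map_inr,
        Equiv.refl_apply, Equiv.Set.sumCompl_apply_inl, Equiv.Set.sumCompl_apply_inr,
        corona_adj_inl_inl, corona_adj_inl_inr, corona_adj_inr_inl, corona_adj_inr_inr, comap_adj,
        Function.Embedding.subtype_apply, iff_false]
    · exact hG.adj_mate_iff hinj
    · exact (G.adj_comm _ _).trans ((hG.adj_mate_iff hinj).trans eq_comm)
    · exact hG.indep _ _ (hG.mate a).2 (hG.mate b).2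

def liftPathTree (hs : s ∈ A) : pathTree (G.induce A) ⟨s, hs⟩ ↪g pathTree G s :=
  (Embedding.induce A).pathTree ⟨s, hs⟩

lemma liftPathTree_fst_mem (hs : s ∈ A) (P : Σ v, (G.induce A).Path ⟨s, hs⟩ v) :
    (liftPathTree hs P).1 ∈ A :=
  P.1.2

lemma pathVertices_liftPathTree (hs : s ∈ A) (P : Σ v, (G.induce A).Path ⟨s, hs⟩ v) :
    pathVertices (liftPathTree hs P) = (pathVertices P).map Subtype.val :=
  (Embedding.induce A).pathVertices_mapRootedPath P

lemma mem_of_mem_pathVertices_liftPathTree {hs : s ∈ A} {P : Σ v, (G.induce A).Path ⟨s, hs⟩ v}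
    {x : V} (hx : x ∈ pathVertices (liftPathTree hs P)) : x ∈ A := by
  rw [pathVertices_liftPathTree] at hx
  obtain ⟨y, -, rfl⟩ := List.mem_map.mp hx
  exact y.2

noncomputable def extendPath (hG : IsAtomStep G A) (hs : s ∈ A)
    (P : Σ v, (G.induce A).Path ⟨s, hs⟩ v) : Σ v, G.Path s v :=
  pathConcat (liftPathTree hs P) (hG.adj_mate P.1)
    fun h => (hG.mate P.1).2 (mem_of_mem_pathVertices_liftPathTree h)

lemma pathVertices_extendPath (hG : IsAtomStep G A) (hs : s ∈ A)
    (P : Σ v, (G.induce A).Path ⟨s, hs⟩ v) :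
    pathVertices (hG.extendPath hs P) = pathVertices (liftPathTree hs P) ++ [(hG.mate P.1 : V)] :=
  pathVertices_pathConcat _ _ _

lemma extendPath_fst_not_mem (hG : IsAtomStep G A) (hs : s ∈ A)
    (P : Σ v, (G.induce A).Path ⟨s, hs⟩ v) : (hG.extendPath hs P).1 ∉ A :=
  (hG.mate P.1).2

lemma adj_extendPath_iff (hG : IsAtomStep G A) {hs : s ∈ A}
    {P Q : Σ v, (G.induce A).Path ⟨s, hs⟩ v} :
    (pathTree G s).Adj (liftPathTree hs P) (hG.extendPath hs Q) ↔ P = Q := by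
  refine ⟨fun h => ?_, by rintro rfl; exact pathTree_adj_pathConcat _ _ _⟩
  rcases eq_or_mem_of_adj_pathConcat h with e | hmem
  · exact (liftPathTree hs).injective e
  · exact absurd (mem_of_mem_pathVertices_liftPathTree hmem) (hG.mate Q.1).2

noncomputable def coronaPathTreeEmbedding (hG : IsAtomStep G A) (hs : s ∈ A) :
    (pathTree (G.induce A) ⟨s, hs⟩).corona ↪g pathTree G s where
  toFun := Sum.elim (liftPathTree hs) (hG.extendPath hs)
  inj' := by
    rintro (P | P) (Q | Q) e <;> simp only [Sum.elim_inl, Sum.elim_inr] at e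
    · exact congrArg _ ((liftPathTree hs).injective e)
    · exact absurd (congrArg Sigma.fst e ▸ liftPathTree_fst_mem hs P)
        (hG.extendPath_fst_not_mem hs Q)
    · exact absurd (congrArg Sigma.fst e ▸ liftPathTree_fst_mem hs Q)
        (hG.extendPath_fst_not_mem hs P)
    · exact congrArg _ ((liftPathTree hs).injective (eq_of_pathConcat_eq e))
  map_rel_iff' {P Q} := by
    rcases P with P | P <;> rcases Q with Q | Q <;>
      simp only [corona_adj_inl_inl, corona_adj_inl_inr, corona_adj_inr_inl, corona_adj_inr_inr,
        iff_false]
    · exact (liftPathTree hs).map_adj_iff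
    · exact hG.adj_extendPath_iff
    · exact ((pathTree G s).adj_comm _ _).trans (hG.adj_extendPath_iff.trans eq_comm)
    · exact fun h => hG.indep _ _ (hG.extendPath_fst_not_mem hs P) (hG.extendPath_fst_not_mem hs Q)
        (pathTree_adj_fst h)

lemma coronaPathTreeEmbedding_surjective (hG : IsAtomStep G A) (hs : s ∈ A)
    (hinj : Injective hG.mate) : Surjective (hG.coronaPathTreeEmbedding hs) := by
  intro P
  induction P using rootedPath_induction with
  | nil => exact ⟨.inl ⟨⟨s, hs⟩, Path.nil⟩, rfl⟩
  | @concat P w h hw ih =>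
    obtain ⟨Q | Q, hQ⟩ := ih
    · change liftPathTree hs Q = P at hQ
      have hfst : (Q.1 : V) = P.1 := congrArg Sigma.fst hQ
      have hv : pathVertices P = (pathVertices Q).map Subtype.val :=
        hQ ▸ pathVertices_liftPathTree hs Q
      by_cases hwA : w ∈ A
      · have hw' : ⟨w, hwA⟩ ∉ pathVertices Q := fun hm => hw (hv ▸ List.mem_map_of_mem hm)
        have h' : (G.induce A).Adj Q.1 ⟨w, hwA⟩ := by
          change G.Adj Q.1 w
          rwa [hfst]
        refine ⟨.inl (pathConcat Q h' hw'), eq_of_pathVertices_eq ?_⟩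
        change pathVertices (liftPathTree hs _) = _
        rw [pathVertices_liftPathTree, pathVertices_pathConcat, pathVertices_pathConcat, hv,
          List.map_append]
        rfl
      · refine ⟨.inr Q, eq_of_pathVertices_eq ?_⟩
        change pathVertices (hG.extendPath hs Q) = _
        rw [pathVertices_extendPath, pathVertices_pathConcat, hQ,
          hG.mate_eq_of_adj hwA (by rwa [hfst])]
    -- The only neighbour of `mate Q.1` in `A` is `Q.1`, which is already on the path.
    · change hG.extendPath hs Q = P at hQ
      have hfst : (hG.mate Q.1 : V) = P.1 := congrArg Sigma.fst hQ
      have hwA : w ∈ A := by_contra fun hwA => hG.indep _ _ (hfst ▸ (hG.mate Q.1).2) hwA h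
      have hwQ : (⟨w, hwA⟩ : A) = Q.1 := (hG.adj_mate_iff hinj).mp (by rw [hfst]; exact h.symm)
      refine absurd ?_ hw
      rw [← hQ, pathVertices_extendPath, show w = Q.1 from congrArg Subtype.val hwQ]
      exact List.mem_append_left _ (fst_mem_pathVertices _)

lemma mem_range_coronaPathTreeEmbedding (hG : IsAtomStep G A) {hs : s ∈ A}
    {P : Σ v, G.Path s v} (hP : P ∈ Set.range (hG.coronaPathTreeEmbedding hs)) :
    (∀ x ∈ pathVertices P, x ∈ A) ∨ P.1 ∉ A := by
  obtain ⟨Q | Q, rfl⟩ := hP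
  · exact .inl fun x hx => mem_of_mem_pathVertices_liftPathTree hx
  · exact .inr (hG.extendPath_fst_not_mem hs Q)

/-- The path `s ⋯ x, mate x, y` leaves `A` and comes back, so it is neither lifted nor extended. -/
lemma coronaPathTreeEmbedding_not_surjective (hG : IsAtomStep G A) (hs : s ∈ A) {x y : A}
    (hxy : hG.mate x = hG.mate y) (q : (G.induce A).Path ⟨s, hs⟩ x)
    (hq : y ∉ (q : (G.induce A).Walk ⟨s, hs⟩ x).support) :
    ¬ Surjective (hG.coronaPathTreeEmbedding hs) := by
  intro hsurj
  let P₀ := liftPathTree hs ⟨x, q⟩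
  have hb : (hG.mate x : V) ∉ pathVertices P₀ :=
    fun h => (hG.mate x).2 (mem_of_mem_pathVertices_liftPathTree h)
  let P₁ := pathConcat P₀ (hG.adj_mate x) hb
  have hv₁ : pathVertices P₁ = pathVertices P₀ ++ [(hG.mate x : V)] :=
    pathVertices_pathConcat _ _ _
  have hy : (y : V) ∉ pathVertices P₁ := by
    rw [hv₁, List.mem_append, List.mem_singleton, pathVertices_liftPathTree]
    rintro (h | h)
    · exact hq ((List.mem_map_of_injective Subtype.val_injective).mp h)
    · exact (hG.mate x).2 (h ▸ y.2)
  have hadj : G.Adj (hG.mate x) y := by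
    rw [hxy]
    exact (hG.adj_mate y).symm
  let P₂ := pathConcat P₁ hadj hy
  have hv₂ : pathVertices P₂ = pathVertices P₀ ++ [(hG.mate x : V), (y : V)] := by
    rw [show pathVertices P₂ = pathVertices P₁ ++ [(y : V)] from pathVertices_pathConcat _ _ _, hv₁]
    simp
  rcases hG.mem_range_coronaPathTreeEmbedding (hsurj P₂) with hA | hA
  · exact (hG.mate x).2 (hA _ (by simp [hv₂]))
  · exact hA y.2

lemma injective_mate_of_surjective (hG : IsAtomStep G A) (hs : s ∈ A)
    (hconn : ∀ a : A, (G.induce A).Reachable ⟨s, hs⟩ a)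
    (hsurj : Surjective (hG.coronaPathTreeEmbedding hs)) : Injective hG.mate := by
  intro x y hxy
  by_contra hne
  rcases exists_path_avoiding_or (hconn x) hne with ⟨q, hq⟩ | ⟨q, hq⟩
  · exact hG.coronaPathTreeEmbedding_not_surjective hs hxy q hq hsurj
  · exact hG.coronaPathTreeEmbedding_not_surjective hs hxy.symm q hq hsurj

end IsAtomStep

namespace IsKAtomSeed

variable {k : ℕ} {V : Type} {G : SimpleGraph V} {s : V}

lemma one_le (h : IsKAtomSeed k G s) : 1 ≤ k := by
  cases h <;> omega

lemma finite (h : IsKAtomSeed k G s) : Finite V := by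
  induction h with
  | base _ _ h => exact Finite.of_subsingleton
  | step G k A s hs hA hI hone hcov ih => exact (IsAtomStep.mk hI hone hcov).finite

lemma card_le (h : IsKAtomSeed k G s) : Nat.card V ≤ 2 ^ (k - 1) := by
  induction h with
  | base _ s h => simpa using (Nat.card_of_subsingleton s).le
  | step G k A s hs hA hI hone hcov ih =>
    have hG : IsAtomStep G A := ⟨hI, hone, hcov⟩
    have := hA.finite
    have := hG.card_compl_le
    rw [hG.card_eq_card_add_card_compl, two_pow_succ_sub_one hA.one_le]
    omega

lemma reachable (h : IsKAtomSeed k G s) (v : V) : G.Reachable s v := by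
  induction h with
  | base _ s h => exact Subsingleton.elim s v ▸ Reachable.refl s
  | step G k A s hs hA hI hone hcov ih =>
    have hreach (a : A) : G.Reachable s a := (ih a).map (Embedding.induce A).toHom
    by_cases hv : v ∈ A
    · exact hreach ⟨v, hv⟩
    · obtain ⟨a, ha, hav⟩ := hcov v hv
      exact (hreach ⟨a, ha⟩).trans hav.reachable

lemma nonempty_embedding (h : IsKAtomSeed k G s) : Nonempty (binomialTree k ↪g pathTree G s) := by
  induction h with
  | base G s h => exact ⟨(binomialTreeOneIso _ ⟨s, Path.nil⟩).toEmbedding⟩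
  | step G k A s hs hA hI hone hcov ih =>
    obtain ⟨φ⟩ := ih
    exact ⟨((binomialTreeSuccIso k hA.one_le).symm.toEmbedding.trans φ.corona).trans
      ((IsAtomStep.mk hI hone hcov).coronaPathTreeEmbedding hs)⟩

lemma nonempty_iso_of_card (h : IsKAtomSeed k G s) (hcard : Nat.card V = 2 ^ (k - 1)) :
    Nonempty (G ≃g binomialTree k) ∧ Nonempty (binomialTree k ≃g pathTree G s) := by
  induction h with
  | base G s h => exact ⟨⟨(binomialTreeOneIso G s).symm⟩, ⟨binomialTreeOneIso _ ⟨s, Path.nil⟩⟩⟩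
  | step G k A s hs hA hI hone hcov ih =>
    have hG : IsAtomStep G A := ⟨hI, hone, hcov⟩
    have := hA.finite
    have hk := hA.one_le
    have := hA.card_le
    have := hG.card_compl_le
    rw [hG.card_eq_card_add_card_compl, two_pow_succ_sub_one hk] at hcard
    have hinj : Injective hG.mate := hG.injective_mate_iff_card.mpr (by omega)
    obtain ⟨⟨eG⟩, ⟨eP⟩⟩ := ih (by omega)
    exact ⟨⟨(hG.coronaIso hinj).symm.trans (eG.corona.trans (binomialTreeSuccIso k hk))⟩,
      ⟨(binomialTreeSuccIso k hk).symm.trans (eP.corona.trans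
        (RelIso.ofSurjective _ (hG.coronaPathTreeEmbedding_surjective hs hinj)))⟩⟩

/-- `T_k ↪ T(A, s)` and `T(A, s) ⊙ K₁ ↪ T(G, s)` squeeze the path counts, so the second embedding
is onto. -/
lemma card_eq_of_card_pathTree_le (h : IsKAtomSeed k G s)
    (hP : Nat.card (Σ v, G.Path s v) ≤ 2 ^ (k - 1)) : Nat.card V = 2 ^ (k - 1) := by
  induction h with
  | base G s h => simpa using Nat.card_of_subsingleton s
  | step G k A s hs hA hI hone hcov ih =>
    have hG : IsAtomStep G A := ⟨hI, hone, hcov⟩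
    have := hA.finite
    have := hG.finite
    obtain ⟨φ⟩ := hA.nonempty_embedding
    let E := hG.coronaPathTreeEmbedding hs
    have hφ := Nat.card_le_card_of_injective φ φ.injective
    have hE := Nat.card_le_card_of_injective E E.injective
    rw [Nat.card_fin] at hφ
    rw [Nat.card_sum] at hE
    rw [two_pow_succ_sub_one hA.one_le] at hP ⊢
    have hEsurj : Surjective E :=
      ((Nat.bijective_iff_injective_and_card E).mpr ⟨E.injective, by rw [Nat.card_sum]; omega⟩).2
    have hinj := hG.injective_mate_of_surjective hs hA.reachable hEsurj
    rw [hG.card_eq_card_add_card_compl, ← hG.injective_mate_iff_card.mp hinj, ih (by omega)]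

end IsKAtomSeed

theorem binomialTree_subgraph_pathTree_general (k : ℕ) {V : Type}
    (G : SimpleGraph V) (s : V) (h : IsKAtomSeed k G s) :
    (∃ f : Fin (2 ^ (k - 1)) → Σ v : V, G.Path s v,
        Function.Injective f ∧
        ∀ a b, (binomialTree k).Adj a b → (pathTree G s).Adj (f a) (f b)) ∧
    (Nonempty (binomialTree k ≃g pathTree G s) ↔ Nonempty (G ≃g binomialTree k)) := by
  obtain ⟨φ⟩ := h.nonempty_embedding
  refine ⟨⟨φ, φ.injective, fun a b => φ.map_adj_iff.mpr⟩, fun ⟨e⟩ => ?_, fun ⟨e⟩ => ?_⟩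
  · refine (h.nonempty_iso_of_card (h.card_eq_of_card_pathTree_le ?_)).1
    rw [← Nat.card_congr e.toEquiv, Nat.card_fin]
  · exact (h.nonempty_iso_of_card (by rw [Nat.card_congr e.toEquiv, Nat.card_fin])).2

/-- For any `k`-atom `G` with seed `s`, the binomial tree `T_k` is isomorphic to a
subgraph of the path tree `T(G, s)`; moreover `T_k` is isomorphic to the whole path
tree `T(G, s)` if and only if `G` is isomorphic to `T_k`. -/
theorem binomialTree_subgraph_pathTree (k : ℕ) (hk : 1 ≤ k) {V : Type}
    (G : SimpleGraph V) (s : V) (h : IsKAtomSeed k G s) :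
    (∃ f : Fin (2 ^ (k - 1)) → Σ v : V, G.Path s v,
        Function.Injective f ∧
        ∀ a b, (binomialTree k).Adj a b → (pathTree G s).Adj (f a) (f b)) ∧
    (Nonempty (binomialTree k ≃g pathTree G s) ↔ Nonempty (G ≃g binomialTree k)) :=
  binomialTree_subgraph_pathTree_general k G s h
end

section
/- Let G be a finite simple graph with Grundy number Γ(G) ≥ k. Then the largest adjacency eigenvalue of G satisfies λ₁(G) ≥ λ₁(T_k). -/
/-- The first-fit (greedy) coloring of `G` along the vertex ordering `0 < 1 < ⋯`:
each vertex receives the smallest color (a natural number) not used by its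
previously colored neighbors. -/
noncomputable def greedyColor {n : ℕ} (G : SimpleGraph (Fin n)) : Fin n → ℕ
  | i => sInf {c : ℕ | ∀ j : Fin n, j < i → G.Adj j i → greedyColor G j ≠ c}
  termination_by i => i.1

/-- The Grundy number of `G`: the largest number of colors used by the
first-fit coloring, over all orderings of the vertices. -/
noncomputable def grundyNumber {V : Type} [Fintype V] (G : SimpleGraph V) : ℕ :=
  letI := Classical.decEq V
  Finset.univ.sup fun σ : Fin (Fintype.card V) ≃ V =>
    (Finset.univ.image (greedyColor (G.comap σ))).card

open scoped Matrix in
/-- `lambda1 G` : the largest eigenvalue of the adjacency matrix of `G`. -/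
noncomputable def lambda1 {V : Type} [Fintype V] (G : SimpleGraph V) : ℝ :=
  letI := Classical.decRel G.Adj
  sSup {x : ℝ | ∃ v : V → ℝ, v ≠ 0 ∧ G.adjMatrix ℝ *ᵥ v = x • v}

open Matrix Finset

/-!
Every colour class of a first-fit colouring sees all smaller colours. Starting from a vertex of
colour `k - 1` and following the Grundy colouring of `T_k` from its root, one obtains a
colour-preserving homomorphism `T_k → G`; since the neighbours of a vertex of `T_k` have pairwise
distinct colours, it is injective on neighbourhoods.

For a locally injective homomorphism `φ : H → G`, push a top eigenvector `f` of `H` forward to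
`g u = ‖f‖_{ℓ²(φ⁻¹ u)}`. This preserves the norm, and the edges of `H` between two fibres form a
matching, so Cauchy–Schwarz shows that the quadratic form of `G` at `g` dominates that of `H` at
`f`. The Rayleigh principle then gives `λ₁(H) ≤ λ₁(G)`.
-/

theorem greedyColor_exists_adj {n : ℕ} (G : SimpleGraph (Fin n)) {i : Fin n} {c : ℕ}
    (hc : c < greedyColor G i) : ∃ j, G.Adj i j ∧ greedyColor G j = c := by
  rw [greedyColor] at hc
  obtain ⟨j, -, hji, hj⟩ := by simpa using Nat.notMem_of_lt_sInf hc
  exact ⟨j, hji.symm, hj⟩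

theorem exists_le_greedyColor_of_le_grundyNumber {V : Type} [Fintype V] (G : SimpleGraph V)
    {k : ℕ} (hk : 1 ≤ k) (hG : k ≤ grundyNumber G) :
    ∃ (σ : Fin (Fintype.card V) ≃ V) (i : Fin (Fintype.card V)),
      k - 1 ≤ greedyColor (G.comap σ) i := by
  obtain ⟨σ, -, hσ⟩ := (Finset.le_sup_iff (show ⊥ < k from hk)).1 hG
  refine ⟨σ, ?_⟩
  by_contra! h
  have : univ.image (greedyColor (G.comap σ)) ⊆ range (k - 1) := by
    simpa [subset_iff] using h
  have := card_le_card this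
  simp only [card_range] at this
  omega

theorem exists_color_eq_of_le {V : Type*} {G : SimpleGraph V} {c : V → ℕ}
    (hc : ∀ v, ∀ i < c v, ∃ w, G.Adj v w ∧ c w = i) {v : V} {i : ℕ} (hi : i ≤ c v) :
    ∃ w, c w = i := by
  obtain hi | hi := hi.eq_or_lt
  · exact ⟨v, hi.symm⟩
  · obtain ⟨w, -, hw⟩ := hc v i hi
    exact ⟨w, hw⟩

theorem exists_coloring_of_le_grundyNumber {V : Type} [Fintype V] (G : SimpleGraph V)
    {k : ℕ} (hk : 1 ≤ k) (hG : k ≤ grundyNumber G) :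
    ∃ c : V → ℕ, (∀ v, ∀ i < c v, ∃ w, G.Adj v w ∧ c w = i) ∧ ∃ v, c v = k - 1 := by
  obtain ⟨σ, i, hi⟩ := exists_le_greedyColor_of_le_grundyNumber G hk hG
  have hc : ∀ v, ∀ j < greedyColor (G.comap σ) (σ.symm v),
      ∃ w, G.Adj v w ∧ greedyColor (G.comap σ) (σ.symm w) = j := by
    intro v j hj
    obtain ⟨w, hvw, hw⟩ := greedyColor_exists_adj _ hj
    exact ⟨σ w, by simpa using hvw, by simpa using hw⟩
  exact ⟨_, hc, exists_color_eq_of_le hc (v := σ i) (by simpa using hi)⟩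

/-- The Grundy colouring of `binomialTree k` by the colours `0, …, k - 1`. -/
def binomialTreeColor (k j : ℕ) : ℕ :=
  if j = 0 then k - 1 else k - 2 - Nat.log 2 j

theorem binomialTreeColor_lt {k i j : ℕ} (hj : j ≠ 0) (hjk : j < 2 ^ (k - 1))
    (hij : i + 2 ^ Nat.log 2 j = j) : binomialTreeColor k j < binomialTreeColor k i := by
  have hlogj : Nat.log 2 j < k - 1 := Nat.log_lt_of_lt_pow hj hjk
  have hi : i < 2 ^ Nat.log 2 j := by
    have := Nat.lt_pow_succ_log_self (b := 2) one_lt_two j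
    rw [pow_succ] at this
    omega
  rw [binomialTreeColor, binomialTreeColor, if_neg hj]
  split_ifs with hi0
  · omega
  · have := Nat.log_lt_of_lt_pow hi0 hi
    omega

theorem binomialTreeColor_injOn_neighborSet (k : ℕ) (t : Fin (2 ^ (k - 1))) :
    Set.InjOn (fun j : Fin (2 ^ (k - 1)) ↦ binomialTreeColor k j)
      ((binomialTree k).neighborSet t) := by
  intro s hs s' hs' hss'
  simp only [SimpleGraph.mem_neighborSet, binomialTree, SimpleGraph.fromRel_adj] at hs hs' hss'
  have hlt {a b : Fin (2 ^ (k - 1))} (hb : (b : ℕ) ≠ 0) (hab : a + 2 ^ Nat.log 2 b = (b : ℕ)) :=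
    binomialTreeColor_lt hb b.2 hab
  obtain ⟨-, ⟨hs0, hts⟩ | ⟨ht0, hst⟩⟩ := hs <;> obtain ⟨-, ⟨hs'0, hts'⟩ | ⟨ht0', hs't⟩⟩ := hs'
  · have hlog : Nat.log 2 s = Nat.log 2 s' := by
      have := Nat.log_lt_of_lt_pow hs0 s.2
      have := Nat.log_lt_of_lt_pow hs'0 s'.2
      simp only [binomialTreeColor, if_neg hs0, if_neg hs'0] at hss'
      omega
    rw [hlog] at hts
    exact Fin.ext (by omega)
  · have := hlt hs0 hts; have := hlt ht0' hs't; omega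
  · have := hlt ht0 hst; have := hlt hs'0 hts'; omega
  · exact Fin.ext (by omega)

section Lift

variable {V : Type*} {G : SimpleGraph V}

noncomputable def binomialTreeLift (nbr : V → ℕ → V) (v₀ : V) (k : ℕ) : ℕ → V
  | 0 => v₀
  | j + 1 => nbr (binomialTreeLift nbr v₀ k (j + 1 - 2 ^ Nat.log 2 (j + 1)))
      (binomialTreeColor k (j + 1))
  decreasing_by exact Nat.sub_lt j.succ_pos (Nat.two_pow_pos _)

theorem binomialTreeLift_of_ne_zero (nbr : V → ℕ → V) (v₀ : V) (k : ℕ) {j : ℕ} (hj : j ≠ 0) :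
    binomialTreeLift nbr v₀ k j =
      nbr (binomialTreeLift nbr v₀ k (j - 2 ^ Nat.log 2 j)) (binomialTreeColor k j) := by
  obtain ⟨j, rfl⟩ := Nat.exists_eq_succ_of_ne_zero hj
  rw [binomialTreeLift]

variable {c : V → ℕ} {nbr : V → ℕ → V} {v₀ : V} {k : ℕ}

theorem color_binomialTreeLift (hnbr : ∀ v, ∀ i < c v, G.Adj v (nbr v i) ∧ c (nbr v i) = i)
    (hv₀ : c v₀ = k - 1) {j : ℕ} (hj : j < 2 ^ (k - 1)) :
    c (binomialTreeLift nbr v₀ k j) = binomialTreeColor k j := by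
  induction j using Nat.strong_induction_on with
  | _ j ih =>
    rcases eq_or_ne j 0 with rfl | hj0
    · simpa [binomialTreeLift, binomialTreeColor] using hv₀
    have hpj : j - 2 ^ Nat.log 2 j + 2 ^ Nat.log 2 j = j :=
      Nat.sub_add_cancel (Nat.pow_log_le_self 2 hj0)
    have hlt : j - 2 ^ Nat.log 2 j < j := Nat.sub_lt (Nat.pos_of_ne_zero hj0) (Nat.two_pow_pos _)
    have hp := ih _ hlt (hlt.trans hj)
    rw [binomialTreeLift_of_ne_zero nbr v₀ k hj0]
    exact (hnbr _ _ (hp ▸ binomialTreeColor_lt hj0 hj hpj)).2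

theorem adj_binomialTreeLift (hnbr : ∀ v, ∀ i < c v, G.Adj v (nbr v i) ∧ c (nbr v i) = i)
    (hv₀ : c v₀ = k - 1) {i j : ℕ} (hj0 : j ≠ 0) (hj : j < 2 ^ (k - 1))
    (hij : i + 2 ^ Nat.log 2 j = j) :
    G.Adj (binomialTreeLift nbr v₀ k i) (binomialTreeLift nbr v₀ k j) := by
  have hi : i = j - 2 ^ Nat.log 2 j := by omega
  have hci := color_binomialTreeLift hnbr hv₀ ((Nat.le.intro hij).trans_lt hj)
  rw [binomialTreeLift_of_ne_zero nbr v₀ k hj0, ← hi]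
  exact (hnbr _ _ (hci ▸ binomialTreeColor_lt hj0 hj hij)).1

end Lift

theorem exists_locallyInjective_hom_binomialTree {V : Type*} {G : SimpleGraph V} {c : V → ℕ}
    (hc : ∀ v, ∀ i < c v, ∃ w, G.Adj v w ∧ c w = i) {v₀ : V} {k : ℕ} (hv₀ : c v₀ = k - 1) :
    ∃ φ : binomialTree k →g G, ∀ t, Set.InjOn φ ((binomialTree k).neighborSet t) := by
  have : ∀ v i, ∃ w, i < c v → G.Adj v w ∧ c w = i := fun v i ↦
    if h : i < c v then (hc v i h).imp fun _ hw _ ↦ hw else ⟨v, fun h' ↦ absurd h' h⟩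
  choose nbr hnbr using this
  have hadj {i j : Fin (2 ^ (k - 1))} (hj : (j : ℕ) ≠ 0) (hij : i + 2 ^ Nat.log 2 j = (j : ℕ)) :=
    adj_binomialTreeLift hnbr hv₀ hj j.2 hij
  refine ⟨⟨fun j ↦ binomialTreeLift nbr v₀ k j, fun {i j} h ↦ ?_⟩, fun t s hs s' hs' h ↦ ?_⟩
  · obtain ⟨-, h | h⟩ := SimpleGraph.fromRel_adj _ _ _ |>.1 h
    · exact hadj h.1 h.2
    · exact (hadj h.1 h.2).symm
  · refine binomialTreeColor_injOn_neighborSet k t hs hs' ?_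
    simp only [← color_binomialTreeLift hnbr hv₀ s.2, ← color_binomialTreeLift hnbr hv₀ s'.2]
    exact congrArg c h

namespace Matrix.IsHermitian

variable {n : Type*} [Fintype n] [DecidableEq n] {A : Matrix n n ℝ}

theorem posSemidef_smul_one_sub (hA : A.IsHermitian) {μ : ℝ} (hμ : ∀ i, hA.eigenvalues i ≤ μ) :
    (μ • 1 - A).PosSemidef := by
  have h : μ • 1 - A = Unitary.conjStarAlgAut ℝ _ hA.eigenvectorUnitary
      (diagonal fun i ↦ μ - hA.eigenvalues i) := by
    conv_lhs => rw [hA.spectral_theorem, ← map_one (Unitary.conjStarAlgAut ℝ _ _), ← map_smul,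
      ← map_sub]
    congr 1
    ext i j
    by_cases hij : i = j <;> simp [hij]
  rw [h, Unitary.conjStarAlgAut_apply, Unitary.isUnit_coe.posSemidef_star_right_conjugate_iff,
    posSemidef_diagonal_iff]
  exact fun i ↦ sub_nonneg.2 (hμ i)

theorem dotProduct_mulVec_le (hA : A.IsHermitian) {μ : ℝ} (hμ : ∀ i, hA.eigenvalues i ≤ μ)
    (x : n → ℝ) : x ⬝ᵥ A *ᵥ x ≤ μ * (x ⬝ᵥ x) := by
  have := (hA.posSemidef_smul_one_sub hμ).dotProduct_mulVec_nonneg x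
  simpa [sub_mulVec, smul_mulVec, dotProduct_sub] using this

theorem exists_eigenvector_forall_dotProduct_mulVec_le [Nonempty n] (hA : A.IsHermitian) :
    ∃ μ : ℝ, (∃ v ≠ 0, A *ᵥ v = μ • v) ∧ ∀ x, x ⬝ᵥ A *ᵥ x ≤ μ * (x ⬝ᵥ x) := by
  obtain ⟨i, hi⟩ := Finite.exists_max hA.eigenvalues
  exact ⟨_, ⟨_, (WithLp.ofLp_eq_zero 2).ne.2 (hA.eigenvectorBasis.orthonormal.ne_zero i),
    hA.mulVec_eigenvectorBasis i⟩, hA.dotProduct_mulVec_le hi⟩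

end Matrix.IsHermitian

section lambda1

variable {W : Type} [Fintype W] (H : SimpleGraph W) [DecidableRel H.Adj]

theorem lambda1_eq {μ : ℝ} (hv : ∃ v ≠ 0, H.adjMatrix ℝ *ᵥ v = μ • v)
    (hle : ∀ x, x ⬝ᵥ H.adjMatrix ℝ *ᵥ x ≤ μ * (x ⬝ᵥ x)) : lambda1 H = μ := by
  rw [lambda1, Subsingleton.elim (Classical.decRel H.Adj) ‹_›]
  refine IsGreatest.csSup_eq ⟨hv, ?_⟩
  rintro r ⟨v, hv0, hrv⟩
  have hpos : 0 < v ⬝ᵥ v := by simpa using dotProduct_self_star_pos_iff.2 hv0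
  have := hle v
  rw [hrv, dotProduct_smul, smul_eq_mul] at this
  exact le_of_mul_le_mul_right this hpos

theorem lambda1_spec [Nonempty W] :
    (∃ v ≠ 0, H.adjMatrix ℝ *ᵥ v = lambda1 H • v) ∧
      ∀ x, x ⬝ᵥ H.adjMatrix ℝ *ᵥ x ≤ lambda1 H * (x ⬝ᵥ x) := by
  classical
  have hH : (H.adjMatrix ℝ).IsHermitian := isHermitian_iff_isSymm.2 H.isSymm_adjMatrix
  obtain ⟨μ, hv, hle⟩ := hH.exists_eigenvector_forall_dotProduct_mulVec_le
  rw [lambda1_eq H hv hle]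
  exact ⟨hv, hle⟩

end lambda1

theorem sum_sum_ite_mul_le_sqrt_mul_sqrt {ι κ : Type*} (S : Finset ι) (T : Finset κ)
    (R : ι → κ → Prop) [∀ s t, Decidable (R s t)] (a : ι → ℝ) (b : κ → ℝ)
    (hS : ∀ s ∈ S, ∀ t ∈ T, ∀ t' ∈ T, R s t → R s t' → t = t')
    (hT : ∀ t ∈ T, ∀ s ∈ S, ∀ s' ∈ S, R s t → R s' t → s = s') :
    ∑ s ∈ S, ∑ t ∈ T, (if R s t then a s * b t else 0) ≤
      √(∑ s ∈ S, a s ^ 2) * √(∑ t ∈ T, b t ^ 2) := by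
  classical
  set M := (S ×ˢ T).filter fun p ↦ R p.1 p.2
  have hM : ∀ p ∈ M, p.1 ∈ S ∧ p.2 ∈ T ∧ R p.1 p.2 := fun p hp ↦ by
    simpa [M, and_assoc] using hp
  have hfst : Set.InjOn Prod.fst (M : Set (ι × κ)) := fun p hp q hq h ↦ by
    obtain ⟨hp₁, hp₂, hpR⟩ := hM p hp
    obtain ⟨hq₁, hq₂, hqR⟩ := hM q hq
    exact Prod.ext h (hS _ hp₁ _ hp₂ _ hq₂ hpR (h ▸ hqR))
  have hsnd : Set.InjOn Prod.snd (M : Set (ι × κ)) := fun p hp q hq h ↦ by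
    obtain ⟨hp₁, hp₂, hpR⟩ := hM p hp
    obtain ⟨hq₁, hq₂, hqR⟩ := hM q hq
    exact Prod.ext (hT _ hp₂ _ hp₁ _ hq₁ hpR (h ▸ hqR)) h
  have hMS : ∑ p ∈ M, a p.1 ^ 2 ≤ ∑ s ∈ S, a s ^ 2 := by
    rw [← sum_image (f := fun s ↦ a s ^ 2) hfst]
    exact sum_le_sum_of_subset_of_nonneg (fun s hs ↦ by
      obtain ⟨p, hp, rfl⟩ := mem_image.1 hs; exact (hM p hp).1) fun _ _ _ ↦ sq_nonneg _
  have hMT : ∑ p ∈ M, b p.2 ^ 2 ≤ ∑ t ∈ T, b t ^ 2 := by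
    rw [← sum_image (f := fun t ↦ b t ^ 2) hsnd]
    exact sum_le_sum_of_subset_of_nonneg (fun t ht ↦ by
      obtain ⟨p, hp, rfl⟩ := mem_image.1 ht; exact (hM p hp).2.1) fun _ _ _ ↦ sq_nonneg _
  calc ∑ s ∈ S, ∑ t ∈ T, (if R s t then a s * b t else 0) = ∑ p ∈ M, a p.1 * b p.2 := by
        rw [sum_filter, sum_product]
    _ ≤ √(∑ p ∈ M, a p.1 ^ 2) * √(∑ p ∈ M, b p.2 ^ 2) := Real.sum_mul_le_sqrt_mul_sqrt _ _ _
    _ ≤ √(∑ s ∈ S, a s ^ 2) * √(∑ t ∈ T, b t ^ 2) := by gcongr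

theorem SimpleGraph.dotProduct_adjMatrix_mulVec {W : Type*} [Fintype W] (H : SimpleGraph W)
    [DecidableRel H.Adj] (x : W → ℝ) :
    x ⬝ᵥ H.adjMatrix ℝ *ᵥ x = ∑ s, ∑ t, if H.Adj s t then x s * x t else 0 := by
  simp only [dotProduct, mulVec, SimpleGraph.adjMatrix_apply, mul_sum]
  refine sum_congr rfl fun s _ ↦ sum_congr rfl fun t _ ↦ ?_
  split_ifs <;> simp

section LocallyInjective

variable {V W : Type} [Fintype V] [Fintype W] {G : SimpleGraph V} {H : SimpleGraph W}

noncomputable def fiberwiseNorm [DecidableEq V] (φ : W → V) (x : W → ℝ) (u : V) : ℝ :=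
  √(∑ t with φ t = u, x t ^ 2)

theorem fiberwiseNorm_dotProduct_self [DecidableEq V] (φ : W → V) (x : W → ℝ) :
    fiberwiseNorm φ x ⬝ᵥ fiberwiseNorm φ x = x ⬝ᵥ x := by
  simp only [dotProduct, fiberwiseNorm, ← sq]
  simp_rw [Real.sq_sqrt (sum_nonneg fun _ _ ↦ sq_nonneg _), sq]
  exact sum_fiberwise _ _ _

theorem dotProduct_adjMatrix_mulVec_le_fiberwiseNorm [DecidableEq V] [DecidableRel G.Adj]
    [DecidableRel H.Adj] (φ : H →g G)
    (hφ : ∀ t, Set.InjOn φ (H.neighborSet t)) (x : W → ℝ) :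
    x ⬝ᵥ H.adjMatrix ℝ *ᵥ x ≤
      fiberwiseNorm φ x ⬝ᵥ G.adjMatrix ℝ *ᵥ fiberwiseNorm φ x := by
  rw [H.dotProduct_adjMatrix_mulVec, G.dotProduct_adjMatrix_mulVec]
  calc ∑ s, ∑ t, (if H.Adj s t then x s * x t else 0)
      = ∑ u, ∑ v, ∑ s with φ s = u, ∑ t with φ t = v,
          (if H.Adj s t then x s * x t else 0) := by
        rw [← sum_fiberwise _ φ]
        exact sum_congr rfl fun u _ ↦
          (sum_congr rfl fun s _ ↦ (sum_fiberwise _ φ _).symm).trans sum_comm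
    _ ≤ ∑ u, ∑ v, if G.Adj u v then fiberwiseNorm φ x u * fiberwiseNorm φ x v else 0 := by
        refine sum_le_sum fun u _ ↦ sum_le_sum fun v _ ↦ ?_
        split_ifs with huv
        · refine sum_sum_ite_mul_le_sqrt_mul_sqrt _ _ _ _ _ ?_ ?_
          · intro s _ t ht t' ht' hst hst'
            exact hφ s hst hst' ((mem_filter.1 ht).2.trans (mem_filter.1 ht').2.symm)
          · intro t _ s hs s' hs' hst hst'
            exact hφ t hst.symm hst'.symm ((mem_filter.1 hs).2.trans (mem_filter.1 hs').2.symm)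
        · refine (sum_eq_zero fun s hs ↦ sum_eq_zero fun t ht ↦ if_neg fun hst ↦ huv ?_).le
          rw [← (mem_filter.1 hs).2, ← (mem_filter.1 ht).2]
          exact φ.map_adj hst

theorem lambda1_le_of_locallyInjective [Nonempty W] (φ : H →g G)
    (hφ : ∀ t, Set.InjOn φ (H.neighborSet t)) : lambda1 H ≤ lambda1 G := by
  classical
  have : Nonempty V := ⟨φ (Classical.arbitrary W)⟩
  obtain ⟨⟨f, hf0, hf⟩, -⟩ := lambda1_spec H
  have hpos : 0 < f ⬝ᵥ f := by simpa using dotProduct_self_star_pos_iff.2 hf0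
  refine le_of_mul_le_mul_right ?_ hpos
  calc lambda1 H * (f ⬝ᵥ f) = f ⬝ᵥ H.adjMatrix ℝ *ᵥ f := by
        rw [hf, dotProduct_smul, smul_eq_mul]
    _ ≤ fiberwiseNorm φ f ⬝ᵥ G.adjMatrix ℝ *ᵥ fiberwiseNorm φ f :=
        dotProduct_adjMatrix_mulVec_le_fiberwiseNorm φ hφ f
    _ ≤ lambda1 G * (fiberwiseNorm φ f ⬝ᵥ fiberwiseNorm φ f) := (lambda1_spec G).2 _
    _ = lambda1 G * (f ⬝ᵥ f) := by rw [fiberwiseNorm_dotProduct_self]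

end LocallyInjective

/-- If `G` has Grundy number at least `k`, then the largest adjacency eigenvalue of
`G` is at least `λ₁(T_k)`. -/
theorem lambda1_ge_lambda1_binomialTree {V : Type} [Fintype V] (G : SimpleGraph V)
    (k : ℕ) (hk : 1 ≤ k) (hG : k ≤ grundyNumber G) :
    lambda1 (binomialTree k) ≤ lambda1 G := by
  obtain ⟨c, hc, v₀, hv₀⟩ := exists_coloring_of_le_grundyNumber G hk hG
  obtain ⟨φ, hφ⟩ := exists_locallyInjective_hom_binomialTree hc hv₀
  have : Nonempty (Fin (2 ^ (k - 1))) := ⟨⟨0, Nat.two_pow_pos _⟩⟩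
  exact lambda1_le_of_locallyInjective φ hφ
end

section
/- Let (f_k) be the real sequence defined by f_1 = 0 and f_{k+1} = (1/2)(f_k + √(f_k² + 4)). Then f_k ≤ √(2(k−1)) for every k ≥ 1. -/
/-- If `f 1 = 0` and `f (k+1) = (f k + √(f k ² + 4)) / 2`, then
`f k ≤ √(2 (k - 1))` for every `k ≥ 1`. -/
theorem recurrence_le_sqrt (f : ℕ → ℝ) (hf1 : f 1 = 0)
    (hrec : ∀ k : ℕ, 1 ≤ k → f (k + 1) = (f k + Real.sqrt (f k ^ 2 + 4)) / 2) :
    ∀ k : ℕ, 1 ≤ k → f k ≤ Real.sqrt (2 * ((k : ℝ) - 1)) := by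
  have main : ∀ k : ℕ, 1 ≤ k → 0 ≤ f k ∧ f k ^ 2 ≤ 2 * ((k : ℝ) - 1) := by
    intro k hk
    induction k, hk using Nat.le_induction with
    | base => simp [hf1]
    | succ k hk ih =>
      obtain ⟨hf0, hfsq⟩ := ih
      set s := Real.sqrt (f k ^ 2 + 4) with hs
      have hs0 : 0 ≤ s := Real.sqrt_nonneg _
      have hs2 : s ^ 2 = f k ^ 2 + 4 := by
        rw [hs, Real.sq_sqrt]; positivity
      have heq := hrec k hk
      constructor
      · rw [heq]; positivity
      · rw [heq]
        have hfs : f k * s ≤ f k ^ 2 + 2 := by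
          nlinarith [mul_nonneg hf0 hs0, sq_nonneg (f k * s - f k ^ 2 - 2)]
        push_cast
        nlinarith
  intro k hk
  obtain ⟨hf0, hfsq⟩ := main k hk
  have : (1:ℝ) ≤ (k:ℝ) := Nat.one_le_cast.mpr hk
  exact (Real.le_sqrt hf0 (by linarith)).mpr hfsq
end

section
/- Let (f_k) be the real sequence defined by f_1 = 0 and f_{k+1} = (1/2)(f_k + √(f_k² + 4)). Then √(2(k−1)) − f_k tends to 0 as k → ∞. -/
open Real Filter

set_option maxHeartbeats 1000000 in
lemma recurrence_key (f : ℕ → ℝ) (hf1 : f 1 = 0)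
    (hrec : ∀ k : ℕ, 1 ≤ k → f (k + 1) = (f k + Real.sqrt (f k ^ 2 + 4)) / 2) :
    ∀ k : ℕ, 1 ≤ k → 0 ≤ f k ∧ ((k : ℝ) - 1) ≤ f k ^ 2 ∧ f k ^ 2 ≤ 2 * ((k : ℝ) - 1) ∧
      2 * ((k : ℝ) - 1) - f k ^ 2 ≤ 4 * Real.log ((k : ℝ) + 2) := by
  intro k hk
  induction k, hk using Nat.le_induction with
  | base =>
    rw [hf1]
    norm_num
    exact Real.log_nonneg (by norm_num)
  | succ k hk ih =>
    obtain ⟨hfk0, hlb, hub, hd⟩ := ih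
    have hkpos : (0:ℝ) < (k:ℝ) + 3 := by positivity
    set s := Real.sqrt (f k ^ 2 + 4) with hs
    have hs0 : 0 ≤ s := Real.sqrt_nonneg _
    have hs2 : s ^ 2 = f k ^ 2 + 4 := Real.sq_sqrt (by positivity)
    have hsf : f k ≤ s := by
      have h := Real.sqrt_le_sqrt (show f k ^ 2 ≤ f k ^ 2 + 4 by linarith)
      rwa [Real.sqrt_sq hfk0] at h
    have hrk := hrec k hk
    have hk1 : (1:ℝ) ≤ (k:ℝ) := by exact_mod_cast hk
    have hf0' : 0 ≤ f (k+1) := by rw [hrk]; positivity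
    have hsum2 : ((k:ℝ) + 3) ≤ (s + f k) ^ 2 := by
      nlinarith [mul_nonneg hs0 hfk0, sq_nonneg (f k)]
    have h16 : (s - f k) ^ 2 * (s + f k) ^ 2 = 16 := by
      linear_combination (s ^ 2 - f k ^ 2 + 4) * hs2
    have hd2 : (s - f k) ^ 2 * ((k:ℝ) + 3) ≤ 16 := by
      nlinarith [sq_nonneg (s - f k), hsum2]
    have hlb' : ((k:ℝ) + 1 - 1) ≤ f (k+1) ^ 2 := by
      rw [hrk]
      push_cast
      nlinarith [mul_nonneg hfk0 (sub_nonneg.mpr hsf)]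
    have hub' : f (k+1) ^ 2 ≤ 2 * ((k:ℝ) + 1 - 1) := by
      rw [hrk]
      push_cast
      nlinarith [mul_nonneg (sub_nonneg.mpr hsf) (sub_nonneg.mpr hsf)]
    have hu : (4 / ((k:ℝ) + 3)) * ((k:ℝ) + 3) = 4 := by field_simp
    have hd3 : (s - f k) ^ 2 ≤ 4 * (4 / ((k:ℝ) + 3)) := by
      nlinarith [hd2, hu, hkpos]
    have hA' : f k ^ 2 + 2 - 4 / ((k:ℝ) + 3) ≤ f (k+1) ^ 2 := by
      rw [hrk]
      nlinarith [hd3, hs2]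
    have hB : Real.log ((k:ℝ) + 2) - Real.log ((k:ℝ) + 3) ≤ -(1 / ((k:ℝ) + 3)) := by
      have hpos : (0:ℝ) < ((k:ℝ) + 2) / ((k:ℝ) + 3) := by positivity
      have h := Real.log_le_sub_one_of_pos hpos
      rw [Real.log_div (by positivity) (by positivity)] at h
      have : ((k:ℝ) + 2) / ((k:ℝ) + 3) - 1 = -(1 / ((k:ℝ) + 3)) := by
        field_simp
        norm_num
      linarith [this ▸ h]
    have hd' : 2 * ((k:ℝ) + 1 - 1) - f (k+1) ^ 2 ≤ 4 * Real.log ((k:ℝ) + 1 + 2) := by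
      have h43 : (4:ℝ) / ((k:ℝ) + 3) = 4 * (1 / ((k:ℝ) + 3)) := by ring
      have : ((k:ℝ) + 1 + 2) = (k:ℝ) + 3 := by ring
      rw [this]
      linarith [hA', hd, hB]
    refine ⟨hf0', ?_, ?_, ?_⟩
    · push_cast
      linarith
    · push_cast
      linarith
    · push_cast
      linarith

/-- If `f 1 = 0` and `f (k+1) = (f k + √(f k ² + 4)) / 2`, then
`√(2 (k - 1)) - f k → 0` as `k → ∞`. -/
theorem sqrt_sub_recurrence_tendsto_zero (f : ℕ → ℝ) (hf1 : f 1 = 0)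
    (hrec : ∀ k : ℕ, 1 ≤ k → f (k + 1) = (f k + Real.sqrt (f k ^ 2 + 4)) / 2) :
    Filter.Tendsto (fun k : ℕ => Real.sqrt (2 * ((k : ℝ) - 1)) - f k)
      Filter.atTop (nhds 0) := by
  have key := recurrence_key f hf1 hrec
  -- upper bound function
  have htop : Tendsto (fun k : ℕ => 8 * Real.log ((k:ℝ) - 1) / Real.sqrt ((k:ℝ) - 1))
      atTop (nhds 0) := by
    have hb : Tendsto (fun x : ℝ => 8 * (Real.log x / x ^ ((1:ℝ)/2))) atTop (nhds 0) := by
      have := ((isLittleO_log_rpow_atTop (by norm_num : (0:ℝ) < 1/2)).tendsto_div_nhds_zero).const_mul (8:ℝ)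
      simpa using this
    have hcast : Tendsto (fun k : ℕ => (k:ℝ) - 1) atTop atTop :=
      tendsto_atTop_add_const_right _ (-1) tendsto_natCast_atTop_atTop
    have hcomp := hb.comp hcast
    refine hcomp.congr' ?_
    filter_upwards [eventually_ge_atTop 2] with k hk
    have hk0 : (0:ℝ) ≤ (k:ℝ) - 1 := by
      have : (2:ℝ) ≤ (k:ℝ) := by exact_mod_cast hk
      linarith
    simp only [Function.comp]
    rw [Real.sqrt_eq_rpow, mul_div_assoc]
  refine tendsto_of_tendsto_of_tendsto_of_le_of_le' tendsto_const_nhds htop ?_ ?_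
  · filter_upwards [eventually_ge_atTop 2] with k hk
    obtain ⟨hfk0, hlb, hub, hd⟩ := key k (by omega)
    have h2k : (2:ℝ) ≤ (k:ℝ) := by exact_mod_cast hk
    have hle : f k ≤ Real.sqrt (2 * ((k:ℝ) - 1)) := by
      rw [show f k = Real.sqrt (f k ^ 2) by rw [Real.sqrt_sq hfk0]]
      exact Real.sqrt_le_sqrt hub
    linarith
  · filter_upwards [eventually_ge_atTop 5] with k hk
    obtain ⟨hfk0, hlb, hub, hd⟩ := key k (by omega)
    have h5k : (5:ℝ) ≤ (k:ℝ) := by exact_mod_cast hk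
    set a := Real.sqrt (2 * ((k:ℝ) - 1)) with ha
    have ha2 : a ^ 2 = 2 * ((k:ℝ) - 1) := Real.sq_sqrt (by linarith)
    have ha0 : 0 < a := Real.sqrt_pos.mpr (by linarith)
    have hfa : f k ≤ a := by
      rw [ha, show f k = Real.sqrt (f k ^ 2) by rw [Real.sqrt_sq hfk0]]
      exact Real.sqrt_le_sqrt hub
    have hb0 : (0:ℝ) < Real.sqrt ((k:ℝ) - 1) := Real.sqrt_pos.mpr (by linarith)
    have hba : Real.sqrt ((k:ℝ) - 1) ≤ a := Real.sqrt_le_sqrt (by linarith)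
    have hlog2 : Real.log ((k:ℝ) + 2) ≤ 2 * Real.log ((k:ℝ) - 1) := by
      have h := Real.log_le_log (by linarith : (0:ℝ) < (k:ℝ) + 2)
        (show (k:ℝ) + 2 ≤ ((k:ℝ) - 1) ^ 2 by nlinarith)
      rwa [Real.log_pow, Nat.cast_ofNat] at h
    rw [le_div_iff₀ hb0]
    have hsq : Real.sqrt ((k:ℝ) - 1) ^ 2 = (k:ℝ) - 1 := Real.sq_sqrt (by linarith)
    nlinarith [mul_le_mul_of_nonneg_left hba (sub_nonneg.mpr hfa),
      mul_le_mul_of_nonneg_right hfa hfk0]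
end

section
/- There exists a function ε : ℝ → ℝ with ε(x) → 0 as x → ∞ such that for every finite simple graph G with at least one vertex, Γ(G) ≤ (μ₁(G) + ε(μ₁(G)))²/2 + 1, where μ₁(G) is the largest root of the matching polynomial of G and Γ(G) is the Grundy number of G. -/
open scoped Classical in
/-- The matching polynomial `μ_G(x) = ∑_M (-1)^{|M|} x^{n - 2|M|}`, the sum running
over all matchings `M` of `G` (sets of pairwise disjoint edges, including `∅`). -/
noncomputable def matchingPolynomial {V : Type} [Fintype V] (G : SimpleGraph V) :
    Polynomial ℝ :=
  ∑ M ∈ Finset.univ.filter (fun M : Finset (Sym2 V) =>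
      (∀ e ∈ M, e ∈ G.edgeSet) ∧
      (M : Set (Sym2 V)).Pairwise fun e f => ∀ v : V, ¬(v ∈ e ∧ v ∈ f)),
    (-1 : Polynomial ℝ) ^ M.card * Polynomial.X ^ (Fintype.card V - 2 * M.card)

/-- `mu1 G` : the largest real root of the matching polynomial of `G`. -/
noncomputable def mu1 {V : Type} [Fintype V] (G : SimpleGraph V) : ℝ :=
  sSup {x : ℝ | (matchingPolynomial G).IsRoot x}

/-!
Take an ordering whose first-fit colouring uses `Γ = m + 1` colours: a vertex of colour `c` has
neighbours of every colour below `c`. For `x > μ₁(G)` the matching polynomials `μ(S)` of all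
induced subgraphs are positive at `x`, because the largest matching root can only decrease when
vertices are deleted. The recurrence `μ(S) = x μ(S - i) - ∑_{j ∈ S, j ~ i} μ(S - i - j)`,
applied to a vertex `i` of colour `c` and to one neighbour of each smaller colour, gives by
induction on `c` that `μ(S)(x) ≤ f_c μ(S - i)(x)`, where `f₀ = x` and `f_{c+1} = f_c - 1 / f_c`. So
`f₀, …, f_m > 0`, and summing `f_c² = f_{c+1}² + 2 - f_c⁻²` gives
`x² ≥ 2m - H_m ≥ 2m - 1 - log m`. Letting `x ↓ μ₁`, and using `m ≤ μ₁²`,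
`2(Γ - 1) ≤ μ₁² + 1 + 2 log μ₁ = μ₁² + 2 μ₁ ε(μ₁)` for `ε(x) = (1 + 2 log x) / (2x)`.
-/

open Finset Polynomial Filter Topology
open scoped Classical

namespace Polynomial.Monic

variable {p : ℝ[X]} {x : ℝ}

theorem exists_isRoot_gt_of_eval_neg (hp : p.Monic) (hx : p.eval x < 0) :
    ∃ r, x < r ∧ p.IsRoot r := by
  have hdeg : 0 < p.degree := by
    refine natDegree_pos_iff_degree_pos.1 (Nat.pos_of_ne_zero fun h0 => ?_)
    norm_num [hp.natDegree_eq_zero.1 h0] at hx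
  have hlim := p.tendsto_atTop_of_leadingCoeff_nonneg hdeg (by simp [hp.leadingCoeff])
  obtain ⟨z, hz, hxz⟩ := ((hlim.eventually_gt_atTop 0).and (eventually_ge_atTop x)).exists
  obtain ⟨r, hr, hr0⟩ := intermediate_value_Icc hxz p.continuous.continuousOn ⟨hx.le, hz.le⟩
  exact ⟨r, lt_of_le_of_ne hr.1 fun h => by simp_all, hr0⟩

theorem eval_pos_of_forall_isRoot_lt (hp : p.Monic) (h : ∀ r, p.IsRoot r → r < x) :
    0 < p.eval x := by
  by_contra! hx
  obtain hx | hx := hx.lt_or_eq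
  · obtain ⟨r, hxr, hr⟩ := hp.exists_isRoot_gt_of_eval_neg hx
    exact (h r hr).not_gt hxr
  · exact (h x hx).false

end Polynomial.Monic

theorem Finset.sum_comp_le_sum_of_injOn {ι κ M : Type*} [AddCommMonoid M] [PartialOrder M]
    [IsOrderedAddMonoid M] {s : Finset ι} {t : Finset κ} {j : ι → κ} {f : κ → M}
    (hj : Set.InjOn j s) (hst : ∀ a ∈ s, j a ∈ t) (hf : ∀ b ∈ t, 0 ≤ f b) :
    ∑ a ∈ s, f (j a) ≤ ∑ b ∈ t, f b := by
  rw [← sum_image hj]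
  exact sum_le_sum_of_subset_of_nonneg (image_subset_iff.2 hst) fun b hb _ => hf b hb

theorem Finset.eq_of_insert_mk_eq_insert_mk {V : Type*} {v u₁ u₂ : V} {M₁ M₂ : Finset (Sym2 V)}
    (h₁ : ∀ e ∈ M₁, v ∉ e) (h₂ : ∀ e ∈ M₂, v ∉ e)
    (heq : insert s(v, u₁) M₁ = insert s(v, u₂) M₂) : u₁ = u₂ ∧ M₁ = M₂ := by
  have hu : s(v, u₂) = s(v, u₁) :=
    (mem_insert.1 (heq ▸ mem_insert_self _ M₂)).resolve_right
      fun h => h₁ _ h (Sym2.mem_mk_left v u₂)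
  obtain rfl := Sym2.congr_right.1 hu
  refine ⟨rfl, ?_⟩
  rw [← erase_insert fun h => h₁ _ h (Sym2.mem_mk_left v u₂), heq,
    erase_insert fun h => h₂ _ h (Sym2.mem_mk_left v u₂)]

namespace SimpleGraph

variable {V : Type*} [Fintype V] (G : SimpleGraph V)

noncomputable def matchingsOn (s : Finset V) : Finset (Finset (Sym2 V)) :=
  univ.filter fun M => (∀ e ∈ M, e ∈ G.edgeSet ∧ ∀ a ∈ e, a ∈ s) ∧
    (M : Set (Sym2 V)).Pairwise fun e f => ∀ v : V, ¬(v ∈ e ∧ v ∈ f)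

/-- The matching polynomial `μ(G[s])` of the subgraph induced by `s`. -/
noncomputable def matchingPolyOn (s : Finset V) : ℝ[X] :=
  ∑ M ∈ G.matchingsOn s, (-1) ^ M.card * X ^ (s.card - 2 * M.card)

variable {G} {s t : Finset V} {M : Finset (Sym2 V)} {u v : V}

theorem mem_matchingsOn : M ∈ G.matchingsOn s ↔
    (∀ e ∈ M, e ∈ G.edgeSet ∧ ∀ a ∈ e, a ∈ s) ∧
      (M : Set (Sym2 V)).Pairwise fun e f => ∀ v : V, ¬(v ∈ e ∧ v ∈ f) := by
  simp [matchingsOn]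

theorem mem_of_mem_matchingsOn (hM : M ∈ G.matchingsOn s) {e : Sym2 V} (he : e ∈ M) {a : V}
    (ha : a ∈ e) : a ∈ s :=
  ((mem_matchingsOn.1 hM).1 e he).2 a ha

theorem matchingsOn_mono (hst : s ⊆ t) : G.matchingsOn s ⊆ G.matchingsOn t := by
  intro M hM
  rw [mem_matchingsOn] at hM ⊢
  exact ⟨fun e he => ⟨(hM.1 e he).1, fun a ha => hst ((hM.1 e he).2 a ha)⟩, hM.2⟩

theorem erase_mem_matchingsOn (hM : M ∈ G.matchingsOn s) (he : s(u, v) ∈ M) :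
    M.erase s(u, v) ∈ G.matchingsOn ((s.erase u).erase v) := by
  obtain ⟨hedge, hpair⟩ := mem_matchingsOn.1 hM
  refine mem_matchingsOn.2 ⟨fun f hf => ⟨(hedge f (mem_of_mem_erase hf)).1, fun a ha => ?_⟩,
    hpair.mono (by simp)⟩
  have hdisj := hpair (mem_of_mem_erase hf) he (ne_of_mem_erase hf)
  have hau : a ≠ u := by rintro rfl; exact hdisj a ⟨ha, Sym2.mem_mk_left _ _⟩
  have hav : a ≠ v := by rintro rfl; exact hdisj a ⟨ha, Sym2.mem_mk_right _ _⟩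
  exact mem_erase.2
    ⟨hav, mem_erase.2 ⟨hau, mem_of_mem_matchingsOn hM (mem_of_mem_erase hf) ha⟩⟩

theorem insert_mem_matchingsOn (hu : u ∈ s) (hv : v ∈ s) (hadj : G.Adj u v)
    (hM : M ∈ G.matchingsOn ((s.erase u).erase v)) : insert s(u, v) M ∈ G.matchingsOn s := by
  obtain ⟨hedge, hpair⟩ := mem_matchingsOn.1 (matchingsOn_mono (erase_subset _ _) hM)
  have hsymm : Std.Symm fun e f : Sym2 V => ∀ w : V, ¬(w ∈ e ∧ w ∈ f) :=
    ⟨fun _ _ h w hw => h w hw.symm⟩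
  refine mem_matchingsOn.2 ⟨fun e he => ?_, ?_⟩
  · rcases mem_insert.1 he with rfl | he
    · exact ⟨hadj, fun a ha => by rcases Sym2.mem_iff.1 ha with rfl | rfl <;> assumption⟩
    · exact ⟨(hedge e he).1, fun a ha => mem_of_mem_erase ((hedge e he).2 a ha)⟩
  · rw [coe_insert, Set.pairwise_insert_of_symm]
    refine ⟨hpair, fun f hf _ w ⟨hw, hwf⟩ => ?_⟩
    have := mem_of_mem_matchingsOn hM hf hwf
    rcases Sym2.mem_iff.1 hw with rfl | rfl <;> simp at this

theorem two_mul_card_le_of_mem_matchingsOn (hM : M ∈ G.matchingsOn s) :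
    2 * M.card ≤ s.card := by
  induction M using Finset.strongInduction generalizing s with
  | H M ih =>
  obtain rfl | ⟨e, he⟩ := M.eq_empty_or_nonempty
  · simp
  induction e using Sym2.ind with
  | h a b =>
  have hab : G.Adj a b := (mem_matchingsOn.1 hM).1 _ he |>.1
  have ha := mem_of_mem_matchingsOn hM he (Sym2.mem_mk_left a b)
  have hb := mem_of_mem_matchingsOn hM he (Sym2.mem_mk_right a b)
  have := ih _ (erase_ssubset he) (erase_mem_matchingsOn hM he)
  have := card_erase_add_one he
  have := card_erase_add_one ha
  have := card_erase_add_one (mem_erase.2 ⟨hab.ne', hb⟩)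
  omega

theorem filter_matchingsOn_avoiding (hv : v ∈ s) :
    (G.matchingsOn s).filter (fun M => ∀ e ∈ M, v ∉ e) = G.matchingsOn (s.erase v) := by
  ext M
  simp only [mem_filter]
  constructor
  · rintro ⟨hM, hvM⟩
    obtain ⟨hedge, hpair⟩ := mem_matchingsOn.1 hM
    refine mem_matchingsOn.2 ⟨fun e he => ⟨(hedge e he).1, fun a ha => ?_⟩, hpair⟩
    exact mem_erase.2 ⟨by rintro rfl; exact hvM e he ha, (hedge e he).2 a ha⟩
  · intro hM
    refine ⟨matchingsOn_mono (erase_subset _ _) hM, fun e he hve => ?_⟩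
    simpa using mem_of_mem_matchingsOn hM he hve

theorem sum_matchingsOn_avoiding (hv : v ∈ s) :
    ∑ M ∈ (G.matchingsOn s).filter (fun M => ∀ e ∈ M, v ∉ e),
      (-1 : ℝ[X]) ^ M.card * X ^ (s.card - 2 * M.card) = X * G.matchingPolyOn (s.erase v) := by
  rw [filter_matchingsOn_avoiding hv, matchingPolyOn, mul_sum]
  refine sum_congr rfl fun M hM => ?_
  have := two_mul_card_le_of_mem_matchingsOn hM
  have := card_erase_add_one hv
  rw [show s.card - 2 * M.card = (s.erase v).card - 2 * M.card + 1 by omega, pow_succ]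
  ring

theorem sum_matchingsOn_covering (hv : v ∈ s) :
    ∑ M ∈ (G.matchingsOn s).filter (fun M => ¬∀ e ∈ M, v ∉ e),
      (-1 : ℝ[X]) ^ M.card * X ^ (s.card - 2 * M.card) =
      -∑ u ∈ (s.erase v).filter (G.Adj v), G.matchingPolyOn ((s.erase v).erase u) := by
  have hvM : ∀ {u M}, M ∈ G.matchingsOn ((s.erase v).erase u) → ∀ e ∈ M, v ∉ e :=
    fun hM e he hve => by simpa using mem_of_mem_matchingsOn hM he hve
  simp only [matchingPolyOn, ← sum_neg_distrib]
  rw [sum_sigma']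
  symm
  refine sum_bij (fun p _ => insert s(v, p.1) p.2) ?_ ?_ ?_ ?_
  · rintro ⟨u, M⟩ hp
    simp only [mem_sigma, mem_filter, mem_erase] at hp
    obtain ⟨⟨⟨-, hu⟩, hadj⟩, hM⟩ := hp
    exact mem_filter.2 ⟨insert_mem_matchingsOn hv hu hadj hM,
      fun h => h _ (mem_insert_self _ _) (Sym2.mem_mk_left v u)⟩
  · rintro ⟨u₁, M₁⟩ hp₁ ⟨u₂, M₂⟩ hp₂ heq
    obtain ⟨rfl, rfl⟩ := eq_of_insert_mk_eq_insert_mk (hvM (mem_sigma.1 hp₁).2)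
      (hvM (mem_sigma.1 hp₂).2) heq
    rfl
  · intro M hM
    obtain ⟨hM, hcov⟩ := mem_filter.1 hM
    obtain ⟨e, he, hve⟩ : ∃ e ∈ M, v ∈ e := by simpa using hcov
    obtain ⟨u, rfl⟩ := Sym2.mem_iff_exists.1 hve
    have hadj : G.Adj v u := ((mem_matchingsOn.1 hM).1 _ he).1
    have hu : u ∈ s := mem_of_mem_matchingsOn hM he (Sym2.mem_mk_right v u)
    refine ⟨⟨u, M.erase s(v, u)⟩, ?_, insert_erase he⟩
    simp only [mem_sigma, mem_filter, mem_erase]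
    exact ⟨⟨⟨hadj.ne', hu⟩, hadj⟩, erase_mem_matchingsOn hM he⟩
  · rintro ⟨u, M⟩ hp
    simp only [mem_sigma, mem_filter] at hp
    obtain ⟨⟨hu, -⟩, hM⟩ := hp
    have := card_erase_add_one hv
    have := card_erase_add_one hu
    rw [card_insert_of_notMem fun h => hvM hM _ h (Sym2.mem_mk_left v u),
      show s.card - 2 * (M.card + 1) = ((s.erase v).erase u).card - 2 * M.card by omega]
    ring

theorem matchingPolyOn_eq_X_mul_sub_sum (hv : v ∈ s) :
    G.matchingPolyOn s = X * G.matchingPolyOn (s.erase v) -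
      ∑ u ∈ (s.erase v).filter (G.Adj v), G.matchingPolyOn ((s.erase v).erase u) := by
  rw [matchingPolyOn, ← sum_filter_add_sum_filter_not _ (fun M => ∀ e ∈ M, v ∉ e),
    sum_matchingsOn_avoiding hv, sum_matchingsOn_covering hv, sub_eq_add_neg]

variable (G s) in
theorem monic_matchingPolyOn : (G.matchingPolyOn s).Monic := by
  have hempty : (∅ : Finset (Sym2 V)) ∈ G.matchingsOn s :=
    mem_matchingsOn.2 ⟨by simp, by simp⟩
  rw [matchingPolyOn, ← add_sum_erase _ _ hempty]
  simp only [card_empty, pow_zero, mul_zero, Nat.sub_zero, one_mul]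
  refine monic_X_pow_add (lt_of_le_of_lt (degree_sum_le _ _) ?_)
  refine (Finset.sup_lt_iff (WithBot.bot_lt_coe s.card)).2 fun M hM => ?_
  obtain ⟨hne, hM⟩ := mem_erase.1 hM
  have := two_mul_card_le_of_mem_matchingsOn hM
  have := card_pos.2 (nonempty_iff_ne_empty.2 hne)
  rw [degree_mul, degree_pow, degree_neg, degree_one, degree_X_pow, smul_zero, zero_add]
  have hlt : s.card - 2 * M.card < s.card := by omega
  exact WithBot.coe_lt_coe.2 hlt

theorem upperBounds_roots_matchingPolyOn_subset_erase (hv : v ∈ s) :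
    upperBounds {x | (G.matchingPolyOn s).IsRoot x} ⊆
      upperBounds {x | (G.matchingPolyOn (s.erase v)).IsRoot x} := by
  induction s using Finset.strongInduction generalizing v with
  | H s ih =>
  intro y hy
  obtain hempty | hne := Set.eq_empty_or_nonempty {x | (G.matchingPolyOn (s.erase v)).IsRoot x}
  · rw [hempty, upperBounds_empty]; exact Set.mem_univ y
  obtain ⟨x₀, hx₀, hmax⟩ := Set.exists_max_image _ id
    (finite_setOfPred_isRoot (monic_matchingPolyOn G _).ne_zero) hne
  refine fun r hr => (hmax r hr).trans (not_lt.1 fun hyx₀ => ?_)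
  -- At the largest root `x₀` of `μ(s - v)` the recurrence makes `∑ μ(s - v - u)(x₀) < 0`,
  -- so some `μ(s - v - u)` has a root beyond `x₀`, against the induction hypothesis.
  have hpos : 0 < (G.matchingPolyOn s).eval x₀ :=
    (monic_matchingPolyOn G s).eval_pos_of_forall_isRoot_lt fun r hr => (hy hr).trans_lt hyx₀
  rw [matchingPolyOn_eq_X_mul_sub_sum hv, eval_sub, eval_mul, IsRoot.def.1 hx₀, mul_zero,
    zero_sub, eval_finsetSum, neg_pos] at hpos
  obtain ⟨u, hu, hneg⟩ : ∃ u ∈ (s.erase v).filter (G.Adj v),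
      (G.matchingPolyOn ((s.erase v).erase u)).eval x₀ < 0 := by
    by_contra! h
    exact (sum_nonneg h).not_gt hpos
  obtain ⟨r, hx₀r, hr⟩ := (monic_matchingPolyOn G _).exists_isRoot_gt_of_eval_neg hneg
  exact (ih _ (erase_ssubset hv) (mem_filter.1 hu).1 hmax hr).not_gt hx₀r

theorem upperBounds_roots_matchingPolyOn_mono (hst : s ⊆ t) :
    upperBounds {x | (G.matchingPolyOn t).IsRoot x} ⊆
      upperBounds {x | (G.matchingPolyOn s).IsRoot x} := by
  induction t using Finset.strongInduction with
  | H t ih =>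
  obtain rfl | hss := hst.eq_or_ssubset
  · rfl
  obtain ⟨v, hvt, hvs⟩ := exists_of_ssubset hss
  exact (upperBounds_roots_matchingPolyOn_subset_erase hvt).trans
    (ih _ (erase_ssubset hvt) (subset_erase.2 ⟨hst, hvs⟩))

end SimpleGraph

theorem matchingPolynomial_eq_matchingPolyOn_univ {V : Type} [Fintype V] (G : SimpleGraph V) :
    matchingPolynomial G = G.matchingPolyOn univ := by
  simp [matchingPolynomial, SimpleGraph.matchingPolyOn, SimpleGraph.matchingsOn]

theorem eval_matchingPolyOn_pos_of_mu1_lt {V : Type} [Fintype V] {G : SimpleGraph V} {x : ℝ}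
    (hx : mu1 G < x) (s : Finset V) : 0 < (G.matchingPolyOn s).eval x := by
  have hroots : mu1 G ∈ upperBounds {x | (G.matchingPolyOn univ).IsRoot x} := by
    rw [mu1, matchingPolynomial_eq_matchingPolyOn_univ]
    exact fun r hr => le_csSup
      (finite_setOfPred_isRoot (G.monic_matchingPolyOn _).ne_zero).bddAbove hr
  exact (G.monic_matchingPolyOn s).eval_pos_of_forall_isRoot_lt fun r hr =>
    (SimpleGraph.upperBounds_roots_matchingPolyOn_mono (subset_univ s) hroots hr).trans_lt hx

noncomputable def ratioBound (x : ℝ) : ℕ → ℝ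
  | 0 => x
  | c + 1 => ratioBound x c - (ratioBound x c)⁻¹

theorem ratioBound_eq_sub_sum (x : ℝ) (c : ℕ) :
    ratioBound x c = x - ∑ c' ∈ range c, (ratioBound x c')⁻¹ := by
  induction c with
  | zero => simp [ratioBound]
  | succ c ih => rw [ratioBound, sum_range_succ]; linarith

theorem sq_ratioBound_eq_sq_succ_add (x : ℝ) {c : ℕ} (hc : ratioBound x c ≠ 0) :
    ratioBound x c ^ 2 = ratioBound x (c + 1) ^ 2 + 2 - (ratioBound x c ^ 2)⁻¹ := by
  rw [ratioBound]
  field_simp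
  ring

/-- Going down from `c = m`, each step of `f_c² = f_{c+1}² + 2 - f_c⁻²` adds at least `1`, so
`f_{m-k}² ≥ k`, and therefore the `k`-th step adds at least `2 - 1/k`. -/
theorem two_mul_sub_harmonic_le_sq {x : ℝ} {m : ℕ} (hf : ∀ c ≤ m, 0 < ratioBound x c) :
    2 * m - (harmonic m : ℝ) ≤ x ^ 2 := by
  suffices h : ∀ k ≤ m, (k : ℝ) ≤ ratioBound x (m - k) ^ 2 ∧
      2 * k - (harmonic k : ℝ) ≤ ratioBound x (m - k) ^ 2 by
    simpa [ratioBound] using (h m le_rfl).2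
  intro k
  induction k with
  | zero => simp [sq_nonneg]
  | succ k ih =>
  intro hk
  obtain ⟨ih₁, ih₂⟩ := ih (by omega)
  have hsucc : m - k = m - (k + 1) + 1 := by omega
  rw [hsucc] at ih₁ ih₂
  set a := ratioBound x (m - (k + 1))
  have ha := hf (m - (k + 1)) (by omega)
  have hb := hf (m - (k + 1) + 1) (by omega)
  have hsq := sq_ratioBound_eq_sq_succ_add x ha.ne'
  have hab : a * ratioBound x (m - (k + 1) + 1) = a ^ 2 - 1 := by
    rw [ratioBound]; field_simp; ring
  have ha1 : 1 ≤ a ^ 2 := by nlinarith [mul_pos ha hb]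
  have hinv1 : (a ^ 2)⁻¹ ≤ 1 := inv_le_one_of_one_le₀ ha1
  have hk1 : (k : ℝ) + 1 ≤ a ^ 2 := by linarith
  have hinv2 : (a ^ 2)⁻¹ ≤ ((k : ℝ) + 1)⁻¹ := inv_anti₀ (by positivity) hk1
  rw [harmonic_succ]
  push_cast
  constructor <;> linarith

theorem two_mul_le_sq_add_one_add_log {x : ℝ} {m : ℕ} (hf : ∀ c ≤ m, 0 < ratioBound x c) :
    2 * (m : ℝ) ≤ x ^ 2 + 1 + Real.log m := by
  linarith [two_mul_sub_harmonic_le_sq hf, harmonic_le_one_add_log m]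

namespace SimpleGraph

variable {V : Type*} (G : SimpleGraph V)

/-- The defining property of Grundy colourings, without properness: a vertex of colour `c` has
neighbours of every colour below `c`. -/
def LowerColorsAdjacent (col : V → ℕ) : Prop :=
  ∀ i, ∀ c < col i, ∃ j, G.Adj j i ∧ col j = c

variable {G} {col : V → ℕ} {x : ℝ}

theorem LowerColorsAdjacent.exists_injOn_adj (hcol : G.LowerColorsAdjacent col) {s : Finset V}
    {i : V} (hsmall : ∀ j, col j < col i → j ∈ s) :
    ∃ j : ℕ → V, Set.InjOn j (range (col i)) ∧
      ∀ c ∈ range (col i), j c ∈ (s.erase i).filter (G.Adj i) ∧ col (j c) = c := by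
  have : Nonempty V := ⟨i⟩
  choose! j hj_adj hj_col using hcol i
  refine ⟨j, fun a ha b hb hab => ?_, fun c hc => ⟨?_, hj_col c (mem_range.1 hc)⟩⟩
  · rw [← hj_col a (mem_range.1 ha), ← hj_col b (mem_range.1 hb), hab]
  · have hc := mem_range.1 hc
    have hji : j c ≠ i := fun h => (hj_col c hc ▸ h ▸ hc).false
    exact mem_filter.2
      ⟨mem_erase.2 ⟨hji, hsmall _ (by rwa [hj_col c hc])⟩, (hj_adj c hc).symm⟩

variable [Fintype V]

theorem LowerColorsAdjacent.eval_matchingPolyOn_le (hcol : G.LowerColorsAdjacent col)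
    (hpos : ∀ s, 0 < (G.matchingPolyOn s).eval x) {s : Finset V} {i : V} (hi : i ∈ s)
    (hsmall : ∀ j, col j < col i → j ∈ s) :
    (G.matchingPolyOn s).eval x ≤
      ratioBound x (col i) * (G.matchingPolyOn (s.erase i)).eval x := by
  induction hc : col i using Nat.strong_induction_on generalizing s i with
  | _ c ih =>
  obtain ⟨j, hj_inj, hj⟩ := hcol.exists_injOn_adj hsmall
  rw [hc] at hj_inj hj hsmall
  set t := s.erase i
  have hIH : ∀ c' ∈ range c,
      (G.matchingPolyOn t).eval x / ratioBound x c' ≤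
        (G.matchingPolyOn (t.erase (j c'))).eval x := by
    intro c' hc'
    obtain ⟨hj_mem, hj_col⟩ := hj c' hc'
    have hc' := mem_range.1 hc'
    have h := ih c' hc' (mem_filter.1 hj_mem).1
      (fun k hk => mem_erase.2 ⟨fun hki => by rw [hki, hc] at hk; omega, hsmall k (by omega)⟩)
      hj_col
    have hr : 0 < ratioBound x c' := pos_of_mul_pos_left ((hpos t).trans_le h) (hpos _).le
    rw [div_le_iff₀ hr]
    linarith
  have hsum : (G.matchingPolyOn t).eval x * ∑ c' ∈ range c, (ratioBound x c')⁻¹ ≤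
      ∑ u ∈ t.filter (G.Adj i), (G.matchingPolyOn (t.erase u)).eval x :=
    calc _ = ∑ c' ∈ range c, (G.matchingPolyOn t).eval x / ratioBound x c' := by
          simp only [mul_sum, div_eq_mul_inv]
      _ ≤ ∑ c' ∈ range c, (G.matchingPolyOn (t.erase (j c'))).eval x := sum_le_sum hIH
      _ ≤ _ := sum_comp_le_sum_of_injOn (f := fun u => (G.matchingPolyOn (t.erase u)).eval x)
          hj_inj (fun c' hc' => (hj c' hc').1) fun _ _ => (hpos _).le
  calc (G.matchingPolyOn s).eval x
      = x * (G.matchingPolyOn t).eval x -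
          ∑ u ∈ t.filter (G.Adj i), (G.matchingPolyOn (t.erase u)).eval x := by
        rw [matchingPolyOn_eq_X_mul_sub_sum hi, eval_sub, eval_mul, eval_X, eval_finsetSum]
    _ ≤ x * (G.matchingPolyOn t).eval x -
          (G.matchingPolyOn t).eval x * ∑ c' ∈ range c, (ratioBound x c')⁻¹ := by linarith
    _ = ratioBound x c * (G.matchingPolyOn t).eval x := by rw [ratioBound_eq_sub_sum]; ring

theorem LowerColorsAdjacent.ratioBound_pos (hcol : G.LowerColorsAdjacent col)
    (hpos : ∀ s, 0 < (G.matchingPolyOn s).eval x) (i : V) {c : ℕ} (hc : c ≤ col i) :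
    0 < ratioBound x c := by
  obtain ⟨k, rfl⟩ : ∃ k, col k = c :=
    hc.eq_or_lt.elim (fun h => ⟨i, h.symm⟩) fun h => (hcol i c h).imp fun _ => And.right
  have h := hcol.eval_matchingPolyOn_le hpos (mem_univ k) fun _ _ => mem_univ _
  exact pos_of_mul_pos_left ((hpos _).trans_le h) (hpos _).le

end SimpleGraph

theorem SimpleGraph.LowerColorsAdjacent.two_mul_le_mu1_sq_add_one_add_log {V : Type} [Fintype V]
    {G : SimpleGraph V} {col : V → ℕ} (hcol : G.LowerColorsAdjacent col) (i : V) :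
    2 * (col i : ℝ) ≤ mu1 G ^ 2 + 1 + Real.log (col i) := by
  have hgt : ∀ y, mu1 G < y → 2 * (col i : ℝ) ≤ y ^ 2 + 1 + Real.log (col i) := fun y hy =>
    two_mul_le_sq_add_one_add_log fun _ hc =>
      hcol.ratioBound_pos (eval_matchingPolyOn_pos_of_mu1_lt hy) i hc
  suffices 2 * (col i : ℝ) - 1 - Real.log (col i) ≤ mu1 G ^ 2 by linarith
  refine le_of_forall_gt_imp_ge_of_dense fun a ha => ?_
  have hlt : mu1 G < √a := (le_abs_self _).trans_lt <| by
    rw [← Real.sqrt_sq_eq_abs]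
    exact Real.sqrt_lt_sqrt (sq_nonneg _) ha
  have := hgt _ hlt
  rw [Real.sq_sqrt ((sq_nonneg _).trans ha.le)] at this
  linarith

theorem lowerColorsAdjacent_greedyColor {n : ℕ} (G : SimpleGraph (Fin n)) :
    G.LowerColorsAdjacent (greedyColor G) := by
  intro i c hc
  rw [greedyColor] at hc
  obtain ⟨j, -, hj, hjc⟩ : ∃ j < i, G.Adj j i ∧ greedyColor G j = c := by
    simpa using Nat.notMem_of_lt_sInf hc
  exact ⟨j, hj, hjc⟩

theorem SimpleGraph.LowerColorsAdjacent.comp_symm {V W : Type*} {G : SimpleGraph V} (σ : W ≃ V)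
    {col : W → ℕ} (h : (G.comap σ).LowerColorsAdjacent col) :
    G.LowerColorsAdjacent (col ∘ σ.symm) := by
  intro i c hc
  obtain ⟨j, hj, hjc⟩ := h (σ.symm i) c hc
  exact ⟨σ j, by simpa using hj, by simpa using hjc⟩

theorem exists_lowerColorsAdjacent_grundyNumber_le {V : Type} [Fintype V] [Nonempty V]
    (G : SimpleGraph V) :
    ∃ (col : V → ℕ) (i : V), G.LowerColorsAdjacent col ∧ grundyNumber G ≤ col i + 1 := by
  obtain ⟨σ, -, hσ⟩ := exists_mem_eq_sup (univ : Finset (Fin (Fintype.card V) ≃ V))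
    ⟨(Fintype.equivFin V).symm, mem_univ _⟩
    fun σ => (univ.image (greedyColor (G.comap σ))).card
  obtain ⟨k, -, hk⟩ := exists_max_image univ (greedyColor (G.comap σ)) univ_nonempty
  refine ⟨greedyColor (G.comap σ) ∘ σ.symm, σ k,
    (lowerColorsAdjacent_greedyColor _).comp_symm σ, ?_⟩
  rw [grundyNumber, hσ, Function.comp_apply, Equiv.symm_apply_apply, ← card_range (_ + 1)]
  exact card_le_card <| image_subset_iff.2 fun j _ =>
    mem_range.2 (Nat.lt_succ_of_le (hk j (mem_univ j)))

noncomputable def grundyEps (x : ℝ) : ℝ := (1 + 2 * Real.log x) / (2 * x)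

theorem tendsto_grundyEps_atTop : Tendsto grundyEps atTop (𝓝 0) := by
  have hinv : Tendsto (fun x : ℝ => (2 * x)⁻¹) atTop (𝓝 0) :=
    tendsto_inv_atTop_zero.comp (tendsto_id.const_mul_atTop two_pos)
  have hlog := Real.tendsto_pow_log_div_mul_add_atTop 2 0 1 two_ne_zero
  convert hinv.add (hlog.const_mul 2) using 1
  · funext x
    simp only [grundyEps, pow_one, add_zero]
    ring
  · simp

theorem two_mul_le_sq_add_grundyEps {t : ℝ} {m : ℕ} (hm : 0 < m)
    (h : 2 * (m : ℝ) ≤ t ^ 2 + 1 + Real.log m) : 2 * (m : ℝ) ≤ (t + grundyEps t) ^ 2 := by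
  have hm' : (0 : ℝ) < m := Nat.cast_pos.2 hm
  have hmt : (m : ℝ) ≤ t ^ 2 := by linarith [Real.log_le_sub_one_of_pos hm']
  have ht : t ≠ 0 := by
    rintro rfl
    have : (1 : ℝ) ≤ m := Nat.one_le_cast.2 hm
    norm_num at hmt
    linarith
  have hlog : Real.log m ≤ 2 * Real.log t := by
    rw [show 2 * Real.log t = Real.log (t ^ 2) by rw [Real.log_pow]; norm_num]
    exact Real.log_le_log hm' (by exact_mod_cast hmt)
  have heps : 2 * t * grundyEps t = 1 + 2 * Real.log t := by
    rw [grundyEps]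
    field_simp
  nlinarith [sq_nonneg (grundyEps t)]

theorem grundyNumber_le_sq_mu1_add_grundyEps {V : Type} [Fintype V] [Nonempty V]
    (G : SimpleGraph V) : (grundyNumber G : ℝ) ≤ (mu1 G + grundyEps (mu1 G)) ^ 2 / 2 + 1 := by
  obtain ⟨col, i, hcol, hgrundy⟩ := exists_lowerColorsAdjacent_grundyNumber_le G
  have hgrundy' : (grundyNumber G : ℝ) ≤ col i + 1 := by exact_mod_cast hgrundy
  obtain h0 | hpos := (col i).eq_zero_or_pos
  · rw [h0, Nat.cast_zero] at hgrundy'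
    linarith [sq_nonneg (mu1 G + grundyEps (mu1 G))]
  · linarith [two_mul_le_sq_add_grundyEps hpos (hcol.two_mul_le_mu1_sq_add_one_add_log i)]

/-- There is a function `ε` with `ε(x) → 0` as `x → ∞` such that every graph `G`
with at least one vertex satisfies `Γ(G) ≤ (μ₁(G) + ε(μ₁(G)))² / 2 + 1`. -/
theorem grundy_le_mu1_bound_little_o :
    ∃ ε : ℝ → ℝ, Filter.Tendsto ε Filter.atTop (nhds 0) ∧
      ∀ (V : Type) [Fintype V] [Nonempty V] (G : SimpleGraph V),
        (grundyNumber G : ℝ) ≤ (mu1 G + ε (mu1 G)) ^ 2 / 2 + 1 :=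
  ⟨grundyEps, tendsto_grundyEps_atTop, fun _ _ _ G => grundyNumber_le_sq_mu1_add_grundyEps G⟩
end

section
/- Let A_k be a k-atom constructed in k steps, where a_i ≥ 1 vertices are added at step i (so a_1 = 1 and the independent set added at step i+1 has size a_{i+1}). Then the largest adjacency eigenvalue of A_k satisfies λ₁(A_k) ≥ (2/k) Σ_{1 ≤ i < j ≤ k} √(a_i/a_j). -/
/-!
Peeling off the independent sets of the construction puts every vertex `v` in a layer
`f v : Fin k`, layer `i` having `a i` vertices, and every vertex has a neighbour in each later
layer (its unique neighbour in the independent set added at that step). Evaluate the quadratic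
form of the adjacency matrix at `x v = 1 / √(a (f v))`: then `‖x‖² = k`, and keeping, for each
vertex and each later layer, one edge into that layer (counted twice by the quadratic form) gives
`xᵀ A x ≥ 2 ∑ᵢ aᵢ ∑_{j > i} 1 / √(aᵢ aⱼ) = 2 ∑_{i < j} √(aᵢ / aⱼ)`. Since the supremum of the
Rayleigh quotient of a symmetric matrix is an eigenvalue, `k λ₁ ≥ xᵀ A x`.
-/

/-- `IsKAtomList k G l` : the graph `G` is a `k`-atom admitting a recursive
construction in `k` steps in which the list `l` records the number of vertices
added at each step (so `l` has length `k`, starts with `1`, and sums to the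
number of vertices of `G`). -/
inductive IsKAtomList : (k : ℕ) → {V : Type} → SimpleGraph V → List ℕ → Prop
  | base {V : Type} (G : SimpleGraph V) (h1 : Nonempty V) (h2 : Subsingleton V) :
      IsKAtomList 1 G [1]
  | step {V : Type} (G : SimpleGraph V) (k : ℕ) (A : Set V) (l : List ℕ)
      (hA : IsKAtomList k (G.induce A) l)
      (hI : ∀ u v : V, u ∉ A → v ∉ A → ¬ G.Adj u v)
      (hone : ∀ a ∈ A, ∃! b : V, b ∉ A ∧ G.Adj a b)
      (hcov : ∀ b : V, b ∉ A → ∃ a ∈ A, G.Adj a b) :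
      IsKAtomList (k + 1) G (l ++ [(Aᶜ : Set V).ncard])

/-- `pairSum k a = ∑_{i < j} √(a i / a j)`. -/
noncomputable def pairSum (k : ℕ) (a : Fin k → ℝ) : ℝ :=
  ∑ p ∈ Finset.univ.filter (fun p : Fin k × Fin k => p.1 < p.2),
    Real.sqrt (a p.1 / a p.2)

open Finset Matrix

theorem Fintype.sum_comp_eq_sum_natCard_smul {α ι M : Type*} [Fintype α] [Fintype ι]
    [DecidableEq ι] [AddCommMonoid M] (f : α → ι) (g : ι → M) :
    ∑ a, g (f a) = ∑ i, Nat.card {a // f a = i} • g i := by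
  rw [← Fintype.sum_fiberwise' f g]
  simp only [sum_const, card_univ, Fintype.card_eq_nat_card]

theorem two_mul_sum_filter_lt_le_sum {V ι : Type*} [Fintype V] [LinearOrder ι] (f : V → ι)
    {w : V → V → ℝ} (hw : ∀ u v, w u v = w v u) (hw0 : ∀ u v, 0 ≤ w u v) :
    2 * ∑ v, ∑ u with f v < f u, w v u ≤ ∑ v, ∑ u, w v u := by
  have hswap : ∑ v, ∑ u with f v < f u, w v u = ∑ v, ∑ u with f u < f v, w v u := by
    simp only [sum_filter]
    rw [sum_comm]
    simp only [hw]
  calc 2 * ∑ v, ∑ u with f v < f u, w v u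
      = ∑ v, ∑ u, ((if f v < f u then w v u else 0) + if f u < f v then w v u else 0) := by
        rw [two_mul]
        nth_rw 2 [hswap]
        simp only [sum_filter, sum_add_distrib]
    _ ≤ ∑ v, ∑ u, w v u := by
        gcongr with v _ u _
        split_ifs with h₁ h₂
        · exact absurd h₂ h₁.not_gt
        all_goals simp [hw0]

theorem Matrix.IsHermitian.dotProduct_mulVec_le_sSup_eigenvalues {n : Type*} [Fintype n]
    [DecidableEq n] {M : Matrix n n ℝ} (hM : M.IsHermitian) (x : n → ℝ) :
    x ⬝ᵥ M *ᵥ x ≤ sSup {c : ℝ | ∃ v, v ≠ 0 ∧ M *ᵥ v = c • v} * (x ⬝ᵥ x) := by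
  rcases eq_or_ne x 0 with rfl | hx
  · simp
  set T := toEuclideanCLM (𝕜 := ℝ) M
  have hT : (T : EuclideanSpace ℝ n →ₗ[ℝ] EuclideanSpace ℝ n).IsSymmetric :=
    isSymmetric_toEuclideanLin_iff.mpr hM
  have hy : WithLp.toLp 2 x ≠ 0 := by simpa using hx
  have : Nontrivial (EuclideanSpace ℝ n) := ⟨⟨_, _, hy⟩⟩
  obtain ⟨v, hv⟩ := hT.hasEigenvalue_iSup_of_finiteDimensional.exists_hasEigenvector
  have hbdd : BddAbove {c : ℝ | ∃ v, v ≠ 0 ∧ M *ᵥ v = c • v} := by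
    refine (Module.End.finite_hasEigenvalue (Matrix.toLin' M)).bddAbove.mono ?_
    rintro c ⟨v, hv0, hv⟩
    exact Module.End.hasEigenvalue_of_hasEigenvector ⟨by simpa using hv, hv0⟩
  have hbddT :
      BddAbove (Set.range fun y : {y : EuclideanSpace ℝ n // y ≠ 0} ↦ T.rayleighQuotient y) :=
    ⟨‖T‖, by rintro _ ⟨y, rfl⟩; exact (le_abs_self _).trans (T.rayleighQuotient_le_norm y.1)⟩
  have hpos : 0 < x ⬝ᵥ x := by simpa using dotProduct_star_self_pos_iff.mpr hx
  rw [← div_le_iff₀ hpos]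
  calc x ⬝ᵥ M *ᵥ x / (x ⬝ᵥ x) = T.rayleighQuotient (WithLp.toLp 2 x) := by
        rw [ContinuousLinearMap.rayleighQuotient, ContinuousLinearMap.reApplyInnerSelf_apply,
          RCLike.re_to_real, ← real_inner_self_eq_norm_sq]
        simp only [T, toEuclideanCLM_toLp, EuclideanSpace.inner_toLp_toLp, star_trivial]
    _ ≤ ⨆ y : {y : EuclideanSpace ℝ n // y ≠ 0}, T.rayleighQuotient y := le_ciSup hbddT ⟨_, hy⟩
    _ ≤ _ := le_csSup hbdd
        ⟨WithLp.ofLp v, by simpa using hv.2, congrArg WithLp.ofLp hv.apply_eq_smul⟩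

theorem SimpleGraph.dotProduct_adjMatrix_mulVec_le_lambda1 {V : Type} [Fintype V]
    (G : SimpleGraph V) [DecidableRel G.Adj] (x : V → ℝ) :
    x ⬝ᵥ G.adjMatrix ℝ *ᵥ x ≤ lambda1 G * (x ⬝ᵥ x) := by
  classical
  rw [lambda1, Subsingleton.elim (Classical.decRel G.Adj) ‹_›]
  exact (isHermitian_iff_isSymm.mpr G.isSymm_adjMatrix).dotProduct_mulVec_le_sSup_eigenvalues x

namespace SimpleGraph

variable {V ι : Type*} [Fintype V] (G : SimpleGraph V) [DecidableRel G.Adj]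

theorem two_mul_sum_upward_le_dotProduct_adjMatrix_mulVec [LinearOrder ι] (f : V → ι)
    {x : V → ℝ} (hx : 0 ≤ x) :
    2 * ∑ v, x v * ∑ u ∈ G.neighborFinset v with f v < f u, x u ≤
      x ⬝ᵥ G.adjMatrix ℝ *ᵥ x := by
  have hquad : x ⬝ᵥ G.adjMatrix ℝ *ᵥ x = ∑ v, ∑ u, if G.Adj v u then x v * x u else 0 := by
    simp [dotProduct, adjMatrix_mulVec_apply, neighborFinset_eq_filter, sum_filter, mul_sum]
  have hup : ∑ v, x v * ∑ u ∈ G.neighborFinset v with f v < f u, x u =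
      ∑ v, ∑ u with f v < f u, if G.Adj v u then x v * x u else 0 := by
    simp only [neighborFinset_eq_filter, filter_filter, sum_filter, mul_sum, ← ite_and, and_comm,
      mul_ite, mul_zero]
  rw [hquad, hup]
  refine two_mul_sum_filter_lt_le_sum f (fun u v ↦ ?_) (fun u v ↦ ?_)
  · simp only [G.adj_comm u v, mul_comm]
  · split_ifs
    exacts [mul_nonneg (hx u) (hx v), le_rfl]

theorem sum_Ioi_le_sum_upward_neighbors [LinearOrder ι] [LocallyFiniteOrderTop ι] {f : V → ι}
    {v : V} (hv : ∀ j, f v < j → ∃ u, f u = j ∧ G.Adj v u) {c : ι → ℝ} (hc : 0 ≤ c) :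
    ∑ j ∈ Ioi (f v), c j ≤ ∑ u ∈ G.neighborFinset v with f v < f u, c (f u) := by
  rw [← sum_fiberwise_of_maps_to (g := f) (t := Ioi (f v)) (by simp)]
  refine sum_le_sum fun j hj ↦ ?_
  obtain ⟨u, rfl, hvu⟩ := hv j (mem_Ioi.mp hj)
  exact single_le_sum (f := fun u ↦ c (f u)) (fun _ _ ↦ hc _) (by simp [hvu, mem_Ioi.mp hj])

theorem two_mul_sum_mul_sum_Ioi_le_dotProduct_adjMatrix_mulVec [LinearOrder ι]
    [LocallyFiniteOrderTop ι] {f : V → ι} (hf : ∀ v j, f v < j → ∃ u, f u = j ∧ G.Adj v u)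
    {c : ι → ℝ} (hc : 0 ≤ c) :
    2 * ∑ v, c (f v) * ∑ j ∈ Ioi (f v), c j ≤
      (fun v ↦ c (f v)) ⬝ᵥ G.adjMatrix ℝ *ᵥ fun v ↦ c (f v) :=
  calc 2 * ∑ v, c (f v) * ∑ j ∈ Ioi (f v), c j
      ≤ 2 * ∑ v, c (f v) * ∑ u ∈ G.neighborFinset v with f v < f u, c (f u) := by
        gcongr with v
        · exact hc _
        · exact G.sum_Ioi_le_sum_upward_neighbors (hf v) hc
    _ ≤ _ := G.two_mul_sum_upward_le_dotProduct_adjMatrix_mulVec f fun v ↦ hc (f v)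

end SimpleGraph

theorem IsKAtomList.pos {k : ℕ} {V : Type} {G : SimpleGraph V} {l : List ℕ}
    (h : IsKAtomList k G l) : 0 < k := by
  cases h <;> omega

theorem IsKAtomList.exists_layering {k : ℕ} {V : Type} {G : SimpleGraph V} {l : List ℕ}
    (h : IsKAtomList k G l) :
    l.length = k ∧ ∃ f : V → Fin k, (∀ i, Nat.card {v // f v = i} = l.getD i 0) ∧
      ∀ v j, f v < j → ∃ u, f u = j ∧ G.Adj v u := by
  induction h with
  | base G hne hsub =>
    refine ⟨rfl, fun _ ↦ 0, fun i ↦ ?_, fun v j hj ↦ ?_⟩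
    · rw [Subsingleton.elim i 0]
      simp
    · simp [Subsingleton.elim j 0] at hj
  | @step V G k A l _ _ hone _ ih =>
    obtain ⟨hlen, f, hcard, hadj⟩ := ih
    classical
    let g : V → Fin (k + 1) := fun v ↦ if hv : v ∈ A then (f ⟨v, hv⟩).castSucc else Fin.last k
    have hg_last {v : V} : g v = Fin.last k ↔ v ∉ A := by
      by_cases hv : v ∈ A <;> simp [g, hv, Fin.castSucc_ne_last]
    have hg_castSucc {v : V} {i : Fin k} : g v = i.castSucc ↔ ∃ hv : v ∈ A, f ⟨v, hv⟩ = i := by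
      by_cases hv : v ∈ A <;> simp [g, hv, (Fin.castSucc_ne_last i).symm]
    refine ⟨by simp [hlen], g, fun i ↦ ?_, fun v j hj ↦ ?_⟩
    · induction i using Fin.lastCases with
      | last =>
        rw [Nat.card_congr (Equiv.subtypeEquivRight fun v ↦ hg_last)]
        simp only [Fin.val_last, ← hlen, List.getD_append_right l _ 0 _ le_rfl, Nat.sub_self]
        exact Nat.card_coe_set_eq Aᶜ
      | cast i =>
        rw [Nat.card_congr ((Equiv.subtypeEquivRight fun v ↦ hg_castSucc).trans
          (Equiv.subtypeSubtypeEquivSubtypeExists (· ∈ A) (f · = i)).symm), hcard i]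
        simp [hlen]
    · have hv : v ∈ A := by
        by_contra hv
        exact (Fin.le_last j).not_gt (hg_last.mpr hv ▸ hj)
      induction j using Fin.lastCases with
      | last =>
        obtain ⟨u, ⟨hu, hvu⟩, -⟩ := hone v hv
        exact ⟨u, hg_last.mpr hu, hvu⟩
      | cast j =>
        obtain ⟨u, hu, hvu⟩ := hadj ⟨v, hv⟩ j (by simpa [g, hv] using hj)
        exact ⟨u, hg_castSucc.mpr ⟨u.2, hu⟩, hvu⟩

theorem pairSum_eq_sum_sqrt_mul_sum_Ioi {k : ℕ} {a : Fin k → ℝ} (ha : 0 ≤ a) :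
    pairSum k a = ∑ i, √(a i) * ∑ j ∈ Ioi i, (√(a j))⁻¹ := by
  rw [pairSum, ← univ_product_univ, sum_filter, sum_product]
  refine sum_congr rfl fun i _ ↦ ?_
  rw [mul_sum, ← sum_filter, filter_lt_eq_Ioi]
  exact sum_congr rfl fun j _ ↦ by rw [Real.sqrt_div (ha i), div_eq_mul_inv]

section Layers

variable {V : Type*} [Fintype V] {k : ℕ} {f : V → Fin k} {a : Fin k → ℕ}

theorem dotProduct_self_inv_sqrt_layerSize (hf : ∀ i, Nat.card {v // f v = i} = a i)
    (ha : ∀ i, 0 < a i) :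
    (fun v ↦ (√(a (f v) : ℝ))⁻¹) ⬝ᵥ (fun v ↦ (√(a (f v) : ℝ))⁻¹) = k :=
  calc ∑ v, (√(a (f v) : ℝ))⁻¹ * (√(a (f v) : ℝ))⁻¹
      = ∑ i, Nat.card {v // f v = i} • ((√(a i : ℝ))⁻¹ * (√(a i : ℝ))⁻¹) :=
        Fintype.sum_comp_eq_sum_natCard_smul f fun i ↦ (√(a i : ℝ))⁻¹ * (√(a i : ℝ))⁻¹
    _ = ∑ _i : Fin k, (1 : ℝ) := sum_congr rfl fun i _ ↦ by
        have : (0 : ℝ) < a i := by exact_mod_cast ha i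
        rw [hf, nsmul_eq_mul, ← mul_inv, Real.mul_self_sqrt this.le, mul_inv_cancel₀ this.ne']
    _ = k := by simp

theorem sum_inv_sqrt_layerSize_mul_sum_Ioi (hf : ∀ i, Nat.card {v // f v = i} = a i) :
    ∑ v, (√(a (f v) : ℝ))⁻¹ * ∑ j ∈ Ioi (f v), (√(a j : ℝ))⁻¹ = pairSum k fun i ↦ (a i : ℝ) :=
  calc ∑ v, (√(a (f v) : ℝ))⁻¹ * ∑ j ∈ Ioi (f v), (√(a j : ℝ))⁻¹
      = ∑ i, Nat.card {v // f v = i} • ((√(a i : ℝ))⁻¹ * ∑ j ∈ Ioi i, (√(a j : ℝ))⁻¹) :=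
        Fintype.sum_comp_eq_sum_natCard_smul f fun i ↦
          (√(a i : ℝ))⁻¹ * ∑ j ∈ Ioi i, (√(a j : ℝ))⁻¹
    _ = _ := by
        rw [pairSum_eq_sum_sqrt_mul_sum_Ioi fun i ↦ Nat.cast_nonneg _]
        refine sum_congr rfl fun i _ ↦ ?_
        rw [hf, nsmul_eq_mul, ← mul_assoc, ← div_eq_mul_inv, Real.div_sqrt]

end Layers

/-- If the `k`-atom `G` is constructed in `k` steps, `a i ≥ 1` vertices being added
at step `i`, then `λ₁(G) ≥ (2 / k) ∑_{i < j} √(a i / a j)`. -/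
theorem lambda1_atom_ge_pairSum (k : ℕ) {V : Type} [Fintype V]
    (G : SimpleGraph V) (a : Fin k → ℕ) (ha : ∀ i, 1 ≤ a i)
    (h : IsKAtomList k G (List.ofFn a)) :
    (2 / (k : ℝ)) * pairSum k (fun i => (a i : ℝ)) ≤ lambda1 G := by
  classical
  obtain ⟨-, f, hcard, hf⟩ := h.exists_layering
  have hlayer (i : Fin k) : Nat.card {v // f v = i} = a i := by simpa using hcard i
  have hquad := G.two_mul_sum_mul_sum_Ioi_le_dotProduct_adjMatrix_mulVec hf
    (c := fun i ↦ (√(a i : ℝ))⁻¹) fun i ↦ by positivity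
  have hlambda := G.dotProduct_adjMatrix_mulVec_le_lambda1 fun v ↦ (√(a (f v) : ℝ))⁻¹
  rw [sum_inv_sqrt_layerSize_mul_sum_Ioi hlayer] at hquad
  rw [dotProduct_self_inv_sqrt_layerSize hlayer ha] at hlambda
  have hk : (0 : ℝ) < k := by exact_mod_cast h.pos
  rw [div_mul_eq_mul_div, div_le_iff₀ hk]
  linarith
end

section
/- Let a_1 ≤ a_2 ≤ … ≤ a_k be a non-decreasing sequence of positive integers with Σ_{j=1}^k a_j = n. Then Σ_{1 ≤ i < j ≤ k} √(a_i/a_j) ≥ k²√k/(8√n) − k. -/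
set_option maxHeartbeats 2000000 in
/-- If `a 1 ≤ a 2 ≤ ⋯ ≤ a k` are positive integers summing to `n`, then
`∑_{i < j} √(a i / a j) ≥ k² √k / (8 √n) - k`. -/
theorem pairSum_ge_of_monotone (k n : ℕ) (a : Fin k → ℕ) (ha : ∀ i, 1 ≤ a i)
    (hmono : Monotone a) (hsum : ∑ i, a i = n) :
    (k : ℝ) ^ 2 * Real.sqrt k / (8 * Real.sqrt n) - k ≤
      pairSum k (fun i => (a i : ℝ)) := by
  have hA1 : ∀ i, (1:ℝ) ≤ (a i : ℝ) := fun i => by exact_mod_cast ha i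
  have hApos : ∀ i, (0:ℝ) < (a i : ℝ) := fun i => lt_of_lt_of_le one_pos (hA1 i)
  have hS0 : (0:ℝ) ≤ pairSum k (fun i => (a i : ℝ)) :=
    Finset.sum_nonneg fun p _ => Real.sqrt_nonneg _
  rcases Nat.lt_or_ge k 2 with hk | hk
  · -- small cases k = 0, 1 : the RHS is ≤ 0
    have h1 : (k:ℝ)^2 * Real.sqrt k / (8 * Real.sqrt n) ≤ (k:ℝ) := by
      rcases Nat.eq_zero_or_pos k with h0 | h1
      · subst h0; simp
      · have hk1 : k = 1 := by omega
        subst hk1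
        have hn1 : 1 ≤ n := by
          rw [← hsum, Fin.sum_univ_one]; exact ha 0
        have hsq : (1:ℝ) ≤ Real.sqrt n :=
          Real.one_le_sqrt.mpr (by exact_mod_cast hn1)
        have h8 : (0:ℝ) < 8 * Real.sqrt n := by linarith
        rw [div_le_iff₀ h8]
        simp only [Nat.cast_one, one_pow, Real.sqrt_one, one_mul, mul_one]
        linarith
    linarith
  -- main case : k ≥ 2
  have hnk : k ≤ n := by
    have h := Finset.card_nsmul_le_sum Finset.univ a 1 (fun i _ => ha i)
    simpa [hsum] using h
  have hn0 : (0:ℝ) < (n:ℝ) := by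
    have : (2:ℝ) ≤ (n:ℝ) := by exact_mod_cast le_trans hk hnk
    linarith
  have hsn : (0:ℝ) < Real.sqrt n := Real.sqrt_pos.mpr hn0
  -- notation
  set s : Fin k → ℝ := fun j => Real.sqrt ((a j : ℝ)) with hs
  have hs1 : ∀ j, (1:ℝ) ≤ s j := fun j => Real.one_le_sqrt.mpr (hA1 j)
  have hspos : ∀ j, (0:ℝ) < s j := fun j => lt_of_lt_of_le one_pos (hs1 j)
  set T : ℝ := ∑ j : Fin k, ((j:ℕ):ℝ) / s j with hT
  set U : ℝ := ∑ j : Fin k, ((j:ℕ):ℝ) * s j with hU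
  set C : ℝ := ∑ j : Fin k, ((j:ℕ):ℝ) with hCdef
  set V : ℝ := ∑ j : Fin k, ((j:ℕ):ℝ) * (a j : ℝ) with hV
  -- pairSum ≥ T
  have hSplit : pairSum k (fun i => (a i : ℝ)) =
      ∑ j : Fin k, ∑ i ∈ Finset.Iio j, Real.sqrt ((a i : ℝ) / (a j : ℝ)) := by
    rw [pairSum, Finset.sum_filter, Fintype.sum_prod_type, Finset.sum_comm]
    refine Finset.sum_congr rfl fun j _ => ?_
    rw [← Finset.sum_filter]
    congr 1
    ext i
    simp [Finset.mem_Iio]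
  have hTS : T ≤ pairSum k (fun i => (a i : ℝ)) := by
    rw [hSplit, hT]
    refine Finset.sum_le_sum fun j _ => ?_
    have step : ∀ i ∈ Finset.Iio j, 1 / s j ≤ Real.sqrt ((a i : ℝ) / (a j : ℝ)) := by
      intro i _
      rw [Real.sqrt_div (hApos i).le]
      have hne : s j ≠ 0 := (hspos j).ne'
      exact div_le_div_of_nonneg_right (Real.one_le_sqrt.mpr (hA1 i)) (hspos j).le
    calc ((j:ℕ):ℝ) / s j = ∑ _i ∈ Finset.Iio j, 1 / s j := by
          rw [Finset.sum_const, Fin.card_Iio, nsmul_eq_mul]; ring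
      _ ≤ _ := Finset.sum_le_sum step
  -- Cauchy–Schwarz 1 : C² ≤ T * U
  have hCS1 : C^2 ≤ T * U := by
    have h := Finset.sum_mul_sq_le_sq_mul_sq Finset.univ
      (fun j : Fin k => Real.sqrt (((j:ℕ):ℝ) / s j))
      (fun j : Fin k => Real.sqrt (((j:ℕ):ℝ) * s j))
    have e1 : ∀ j : Fin k, Real.sqrt (((j:ℕ):ℝ) / s j) * Real.sqrt (((j:ℕ):ℝ) * s j)
        = ((j:ℕ):ℝ) := by
      intro j
      rw [← Real.sqrt_mul (by positivity)]
      have hne : s j ≠ 0 := (hspos j).ne'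
      have : ((j:ℕ):ℝ) / s j * (((j:ℕ):ℝ) * s j) = (((j:ℕ):ℝ))^2 := by
        field_simp
      rw [this, Real.sqrt_sq (by positivity)]
    have e2 : ∀ j : Fin k, Real.sqrt (((j:ℕ):ℝ) / s j) ^ 2 = ((j:ℕ):ℝ) / s j := by
      intro j; exact Real.sq_sqrt (by positivity)
    have e3 : ∀ j : Fin k, Real.sqrt (((j:ℕ):ℝ) * s j) ^ 2 = ((j:ℕ):ℝ) * s j := by
      intro j; exact Real.sq_sqrt (by positivity)
    simp only [e1, e2, e3] at h
    exact h
  -- Cauchy–Schwarz 2 : U² ≤ C * V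
  have hCS2 : U^2 ≤ C * V := by
    have h := Finset.sum_mul_sq_le_sq_mul_sq Finset.univ
      (fun j : Fin k => Real.sqrt ((j:ℕ):ℝ))
      (fun j : Fin k => Real.sqrt ((j:ℕ):ℝ) * s j)
    have e1 : ∀ j : Fin k, Real.sqrt ((j:ℕ):ℝ) * (Real.sqrt ((j:ℕ):ℝ) * s j)
        = ((j:ℕ):ℝ) * s j := by
      intro j
      rw [← mul_assoc, Real.mul_self_sqrt (by positivity)]
    have e2 : ∀ j : Fin k, Real.sqrt ((j:ℕ):ℝ) ^ 2 = ((j:ℕ):ℝ) := by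
      intro j; exact Real.sq_sqrt (by positivity)
    have e3 : ∀ j : Fin k, (Real.sqrt ((j:ℕ):ℝ) * s j) ^ 2 = ((j:ℕ):ℝ) * ((a j : ℝ)) := by
      intro j
      rw [mul_pow, Real.sq_sqrt (by positivity), hs, Real.sq_sqrt (hApos j).le]
    simp only [e1, e2, e3] at h
    exact h
  -- value of C
  have hCval : C = (k:ℝ) * ((k:ℝ) - 1) / 2 := by
    rw [hCdef, Fin.sum_univ_eq_sum_range (fun i => ((i:ℕ):ℝ)) k]
    have h := Finset.sum_range_id_mul_two k
    have hk1 : (1:ℕ) ≤ k := by omega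
    have h2 := congrArg (Nat.cast : ℕ → ℝ) h
    push_cast [Nat.cast_sub hk1] at h2
    linarith
  -- U ≥ C > 0
  have hUC : C ≤ U := by
    rw [hU, hCdef]
    refine Finset.sum_le_sum fun j _ => ?_
    nlinarith [hs1 j, Nat.cast_nonneg (α := ℝ) (j : ℕ)]
  -- V ≤ (k-1) * n
  have hsumR : ∑ j : Fin k, ((a j : ℝ)) = (n:ℝ) := by
    rw [← hsum]; push_cast; rfl
  have hVle : V ≤ ((k:ℝ) - 1) * (n:ℝ) := by
    rw [hV, ← hsumR, Finset.mul_sum]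
    refine Finset.sum_le_sum fun j _ => ?_
    have hj : ((j:ℕ):ℝ) ≤ (k:ℝ) - 1 := by
      have : (j:ℕ) + 1 ≤ k := j.isLt
      have : ((j:ℕ):ℝ) + 1 ≤ (k:ℝ) := by exact_mod_cast this
      linarith
    exact mul_le_mul_of_nonneg_right hj (hApos j).le
  clear_value s T U C V
  have hCpos : (0:ℝ) < C := by
    rw [hCval]
    have : (2:ℝ) ≤ (k:ℝ) := by exact_mod_cast hk
    nlinarith
  have hUpos : (0:ℝ) < U := lt_of_lt_of_le hCpos hUC
  have hkR : (2:ℝ) ≤ (k:ℝ) := by exact_mod_cast hk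
  have hD : (0:ℝ) < (k:ℝ) - 1 := by linarith
  -- U ≤ √(C * ((k-1) * n))
  have hUsq : U ≤ Real.sqrt (C * (((k:ℝ) - 1) * (n:ℝ))) := by
    rw [Real.le_sqrt hUpos.le (mul_nonneg hCpos.le (mul_nonneg hD.le hn0.le))]
    calc U^2 ≤ C * V := hCS2
      _ ≤ C * (((k:ℝ) - 1) * (n:ℝ)) := by
          exact mul_le_mul_of_nonneg_left hVle hCpos.le
  -- T ≥ C²/U ≥ C²/√(C(k-1)n)
  have hTlb : C^2 / Real.sqrt (C * (((k:ℝ) - 1) * (n:ℝ))) ≤ T := by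
    have hQpos : (0:ℝ) < Real.sqrt (C * (((k:ℝ) - 1) * (n:ℝ))) :=
      Real.sqrt_pos.mpr (mul_pos hCpos (mul_pos hD hn0))
    have h1 : C^2 / Real.sqrt (C * (((k:ℝ) - 1) * (n:ℝ))) ≤ C^2 / U := by
      apply div_le_div_of_nonneg_left (by nlinarith [hCpos] : (0:ℝ) ≤ C^2) hUpos hUsq
    have h2 : C^2 / U ≤ T := by
      rw [div_le_iff₀ hUpos]
      exact hCS1
    linarith
  -- final numeric comparison
  have hfinal : (k:ℝ)^2 * Real.sqrt k / (8 * Real.sqrt n) ≤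
      C^2 / Real.sqrt (C * (((k:ℝ) - 1) * (n:ℝ))) := by
    have hsplitsqrt : Real.sqrt (C * (((k:ℝ) - 1) * (n:ℝ)))
        = Real.sqrt (C * ((k:ℝ) - 1)) * Real.sqrt (n:ℝ) := by
      rw [← Real.sqrt_mul (mul_nonneg hCpos.le hD.le), mul_assoc]
    rw [hsplitsqrt]
    have hCD : Real.sqrt (C * ((k:ℝ) - 1)) > 0 := Real.sqrt_pos.mpr (mul_pos hCpos hD)
    rw [div_le_div_iff₀ (by positivity) (mul_pos hCD hsn)]
    -- goal : k² √k * (√(C(k-1)) * √n) ≤ C² * (8 √n)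
    have key : (k:ℝ)^2 * Real.sqrt k * Real.sqrt (C * ((k:ℝ) - 1)) ≤ 8 * C^2 := by
      have hmul : Real.sqrt k * Real.sqrt (C * ((k:ℝ) - 1))
          = Real.sqrt ((k:ℝ) * (C * ((k:ℝ) - 1))) := by
        rw [Real.sqrt_mul (Nat.cast_nonneg k)]
      have hid : (k:ℝ) * (C * ((k:ℝ) - 1)) = 2 * C^2 := by
        rw [hCval]; ring
      have hsqrt2C : Real.sqrt (2 * C^2) = Real.sqrt 2 * C := by
        rw [Real.sqrt_mul (by norm_num), Real.sqrt_sq hCpos.le]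
      have hs2 : Real.sqrt 2 ≤ 2 := by
        nlinarith [Real.sq_sqrt (by norm_num : (0:ℝ) ≤ 2), Real.sqrt_nonneg 2]
      have hnum : Real.sqrt 2 * (k:ℝ)^2 ≤ 8 * C := by
        rw [hCval]
        nlinarith [Real.sqrt_nonneg 2]
      calc (k:ℝ)^2 * Real.sqrt k * Real.sqrt (C * ((k:ℝ) - 1))
          = (k:ℝ)^2 * (Real.sqrt k * Real.sqrt (C * ((k:ℝ) - 1))) := by ring
        _ = (k:ℝ)^2 * Real.sqrt (2 * C^2) := by rw [hmul, hid]
        _ = Real.sqrt 2 * (k:ℝ)^2 * C := by rw [hsqrt2C]; ring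
        _ ≤ 8 * C * C := mul_le_mul_of_nonneg_right hnum hCpos.le
        _ = 8 * C^2 := by ring
    calc (k:ℝ)^2 * Real.sqrt k * (Real.sqrt (C * ((k:ℝ) - 1)) * Real.sqrt n)
        = ((k:ℝ)^2 * Real.sqrt k * Real.sqrt (C * ((k:ℝ) - 1))) * Real.sqrt n := by ring
      _ ≤ (8 * C^2) * Real.sqrt n := mul_le_mul_of_nonneg_right key hsn.le
      _ = C^2 * (8 * Real.sqrt n) := by ring
  have hkpos : (0:ℝ) ≤ (k:ℝ) := Nat.cast_nonneg k
  linarith [hfinal, hTlb, hTS]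
end

section
/- Every k-atom A_k on n vertices satisfies λ₁(A_k) ≥ k√k/(4√n) − 2, where λ₁(A_k) is the largest eigenvalue of the adjacency matrix of A_k. -/
/-- `IsKAtom k G` : the graph `G` is a `k`-atom.  `K₁` is the only `1`-atom, and a
`(k+1)`-atom is partitioned into an independent set `I = Aᶜ` and a set `A` inducing a
`k`-atom, such that every vertex of `A` has exactly one neighbor in `I` and every
vertex of `I` has at least one neighbor in `A`. -/
inductive IsKAtom : (k : ℕ) → {V : Type} → SimpleGraph V → Prop
  | base {V : Type} (G : SimpleGraph V) (h1 : Nonempty V) (h2 : Subsingleton V) :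
      IsKAtom 1 G
  | step {V : Type} (G : SimpleGraph V) (k : ℕ) (A : Set V)
      (hA : IsKAtom k (G.induce A))
      (hI : ∀ u v : V, u ∉ A → v ∉ A → ¬ G.Adj u v)
      (hone : ∀ a ∈ A, ∃! b : V, b ∉ A ∧ G.Adj a b)
      (hcov : ∀ b : V, b ∉ A → ∃ a ∈ A, G.Adj a b) :
      IsKAtom (k + 1) G

/-!
Let `A_1 ⊂ A_2 ⊂ ⋯ ⊂ A_k = V` be the nested atoms of the recursive construction and
`s_j = |A_j|`, so that `s_1 = 1`, `s_j < s_{j+1} ≤ 2 s_j` and `n = s_k`. Every vertex of `A_j` has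
a neighbour in `A_{j+1} \ A_j`, so `A_m` spans at least `∑_{j<m} s_j` edges, and the Rayleigh
quotient of the indicator vector of `A_m` gives `λ₁ s_m ≥ 2 ∑_{j<m} s_j`.

Let `m` be the last index with `s_m ≤ T := √(nk)`. Since `s_j ≥ j`, the quotient at `A_m` gives
`λ₁ T ≥ m (m - 1)`, which is enough when `m ≥ 3k/4`. Otherwise `s_j ≥ s_m > T/2` for `j ≥ m`, and
the quotient at `A_k = V` gives `λ₁ n ≥ (k - m) T ≥ k T / 4`.
-/

open Finset Matrix WithLp

theorem Matrix.IsHermitian.exists_eigenvalue_rayleigh_le {n : Type*} [Fintype n] [DecidableEq n]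
    {A : Matrix n n ℝ} (hA : A.IsHermitian) {x : n → ℝ} (hx : x ≠ 0) :
    ∃ μ : ℝ, (∃ v ≠ 0, A *ᵥ v = μ • v) ∧ x ⬝ᵥ (A *ᵥ x) ≤ μ * (x ⬝ᵥ x) := by
  set T := A.toEuclideanLin
  have hT : T.IsSymmetric := isSymmetric_toEuclideanLin_iff.mpr hA
  have hx' : toLp 2 x ≠ 0 := by simpa using hx
  have : Nontrivial (EuclideanSpace ℝ n) := ⟨⟨toLp 2 x, 0, hx'⟩⟩
  obtain ⟨w, hw⟩ := hT.hasEigenvalue_iSup_of_finiteDimensional.exists_hasEigenvector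
  refine ⟨_, ⟨ofLp w, by simpa using hw.2, congrArg ofLp hw.apply_eq_smul⟩, ?_⟩
  let T' := LinearMap.toContinuousLinearMap T
  have hbdd : BddAbove (Set.range fun z : {z : EuclideanSpace ℝ n // z ≠ 0} =>
      RCLike.re (inner ℝ (T z) (z : EuclideanSpace ℝ n)) / ‖(z : EuclideanSpace ℝ n)‖ ^ 2) :=
    ⟨‖T'‖, by rintro _ ⟨z, rfl⟩; exact (le_abs_self _).trans (T'.rayleighQuotient_le_norm z)⟩
  have hle := le_ciSup hbdd ⟨toLp 2 x, hx'⟩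
  rw [div_le_iff₀ (by positivity)] at hle
  have hinner : RCLike.re (inner ℝ (T (toLp 2 x)) (toLp 2 x)) = x ⬝ᵥ (A *ᵥ x) := by
    simp [T, EuclideanSpace.inner_toLp_toLp]
  have hnorm : ‖toLp 2 x‖ ^ 2 = x ⬝ᵥ x := by
    rw [← real_inner_self_eq_norm_sq, EuclideanSpace.inner_toLp_toLp]
    simp
  rwa [hinner, hnorm] at hle

namespace SimpleGraph

section Spectral

variable {V : Type} [Fintype V] (G : SimpleGraph V) [DecidableRel G.Adj]

theorem le_lambda1 {μ : ℝ} {v : V → ℝ} (hv : v ≠ 0) (hμ : G.adjMatrix ℝ *ᵥ v = μ • v) :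
    μ ≤ lambda1 G := by
  classical
  have hfin : {x : ℝ | ∃ v : V → ℝ, v ≠ 0 ∧ G.adjMatrix ℝ *ᵥ v = x • v}.Finite := by
    refine (Module.End.finite_hasEigenvalue (toLin' (G.adjMatrix ℝ))).subset ?_
    rintro x ⟨w, hw, hwx⟩
    exact Module.End.hasEigenvalue_of_hasEigenvector
      ⟨Module.End.mem_eigenspace_iff.mpr (by simpa using hwx), hw⟩
  have hdec : Classical.decRel G.Adj = ‹DecidableRel G.Adj› := Subsingleton.elim _ _
  unfold lambda1
  rw [hdec]
  exact le_csSup hfin.bddAbove ⟨v, hv, hμ⟩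

theorem dotProduct_adjMatrix_mulVec_le_lambda1_s15 (x : V → ℝ) :
    x ⬝ᵥ (G.adjMatrix ℝ *ᵥ x) ≤ lambda1 G * (x ⬝ᵥ x) := by
  classical
  rcases eq_or_ne x 0 with rfl | hx
  · simp
  obtain ⟨μ, ⟨v, hv, hμ⟩, hle⟩ := (G.isHermitian_adjMatrix ℝ).exists_eigenvalue_rayleigh_le hx
  exact hle.trans (by gcongr; exacts [dotProduct_self_star_nonneg x, G.le_lambda1 hv hμ])

theorem card_interedges_le_lambda1 (s : Finset V) :
    (#(G.interedges s s) : ℝ) ≤ lambda1 G * #s := by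
  classical
  let x : V → ℝ := fun v => if v ∈ s then 1 else 0
  have hxx : x ⬝ᵥ x = #s := by simp [x, dotProduct]
  have hxAx : x ⬝ᵥ (G.adjMatrix ℝ *ᵥ x) = #(G.interedges s s) := by
    rw [interedges_def, card_filter, sum_product]
    simp [x, dotProduct, mulVec, adjMatrix_apply, sum_ite_mem]
  simpa [hxx, hxAx] using G.dotProduct_adjMatrix_mulVec_le_lambda1_s15 x

end Spectral

theorem Embedding.card_interedges_map {W V : Type*} {H : SimpleGraph W} {G : SimpleGraph V}
    [DecidableRel H.Adj] [DecidableRel G.Adj] (f : H ↪g G) (s t : Finset W) :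
    #(G.interedges (s.map f.toEmbedding) (t.map f.toEmbedding)) = #(H.interedges s t) := by
  rw [← card_map (f.toEmbedding.prodMap f.toEmbedding)]
  congr 1
  ext ⟨a, b⟩
  simp only [mem_interedges_iff, mem_map, Function.Embedding.prodMap, Prod.exists,
    Function.Embedding.coeFn_mk, Prod.map, Prod.mk.injEq, RelEmbedding.coe_toEmbedding]
  constructor
  · rintro ⟨⟨x, hx, rfl⟩, ⟨y, hy, rfl⟩, hxy⟩
    exact ⟨x, y, ⟨hx, hy, f.map_adj_iff.mp hxy⟩, rfl, rfl⟩
  · rintro ⟨x, y, ⟨hx, hy, hxy⟩, rfl, rfl⟩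
    exact ⟨⟨x, hx, rfl⟩, ⟨y, hy, rfl⟩, f.map_adj_iff.mpr hxy⟩

variable {V : Type*} [Fintype V] {G : SimpleGraph V}

theorem card_lt_card_univ_le_two_mul {s : Finset V} (hs : s.Nonempty)
    (hone : ∀ a ∈ s, ∃! b, b ∉ s ∧ G.Adj a b) (hcov : ∀ b ∉ s, ∃ a ∈ s, G.Adj a b) :
    #s < Fintype.card V ∧ Fintype.card V ≤ 2 * #s := by
  classical
  have hcompl : #sᶜ ≤ #s := by
    refine card_le_card_of_forall_subsingleton' G.Adj (fun b hb => hcov b (mem_compl.mp hb))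
      fun a ha b hb b' hb' => ?_
    simp only [Set.mem_ofPred_eq, mem_compl] at hb hb'
    exact (hone a ha).unique hb hb'
  have hne : sᶜ.Nonempty := by
    obtain ⟨a, ha⟩ := hs
    obtain ⟨b, ⟨hb, -⟩, -⟩ := hone a ha
    exact ⟨b, mem_compl.mpr hb⟩
  have := card_add_card_compl s
  have := hne.card_pos
  omega

theorem card_interedges_add_two_mul_card_le [DecidableRel G.Adj] {s : Finset V}
    (hs : ∀ a ∈ s, ∃ b ∉ s, G.Adj a b) :
    #(G.interedges s s) + 2 * #s ≤ #(G.interedges univ univ) := by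
  classical
  have hout : s ⊆ (G.interedges s sᶜ).image Prod.fst := fun a ha => by
    obtain ⟨b, hb, hab⟩ := hs a ha
    exact mem_image.mpr ⟨(a, b), by simp [mem_interedges_iff, ha, hb, hab], rfl⟩
  have hin : s ⊆ (G.interedges sᶜ s).image Prod.snd := fun a ha => by
    obtain ⟨b, hb, hab⟩ := hs a ha
    exact mem_image.mpr ⟨(b, a), by simp [mem_interedges_iff, ha, hb, hab.symm], rfl⟩
  have hdisj := disjoint_compl_right (a := s)
  calc #(G.interedges s s) + 2 * #s
      ≤ #(G.interedges s s) + #(G.interedges s sᶜ) + #(G.interedges sᶜ s) := by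
        have := (card_le_card hout).trans card_image_le
        have := (card_le_card hin).trans card_image_le
        omega
    _ = #(G.interedges s s ∪ G.interedges s sᶜ ∪ G.interedges sᶜ s) := by
        rw [card_union_of_disjoint, card_union_of_disjoint]
        · exact G.interedges_disjoint_right s hdisj
        · exact disjoint_union_left.mpr ⟨G.interedges_disjoint_left hdisj s,
            (G.interedges_disjoint_left hdisj univ).mono
              (G.interedges_mono subset_rfl (subset_univ _))
              (G.interedges_mono subset_rfl (subset_univ _))⟩
    _ ≤ #(G.interedges univ univ) := by
        refine card_le_card (union_subset (union_subset ?_ ?_) ?_) <;>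
          exact G.interedges_mono (subset_univ _) (subset_univ _)

end SimpleGraph

structure IsAtomProfile (k : ℕ) (s : ℕ → ℕ) : Prop where
  one : s 1 = 1
  growth : ∀ j, 1 ≤ j → j < k → s j < s (j + 1) ∧ s (j + 1) ≤ 2 * s j

namespace IsAtomProfile

variable {k : ℕ} {s : ℕ → ℕ}

theorem extend (hs : IsAtomProfile k s) (hk : 1 ≤ k) {N : ℕ} (hlt : s k < N) (hle : N ≤ 2 * s k) :
    IsAtomProfile (k + 1) fun j => if j ≤ k then s j else N := by
  refine ⟨by simp [hk, hs.one], fun j hj hjk => ?_⟩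
  rcases (Nat.lt_succ_iff.mp hjk).lt_or_eq with hjk | rfl
  · simpa [hjk.le, Nat.succ_le_of_lt hjk] using hs.growth j hj hjk
  · simpa using ⟨hlt, hle⟩

theorem add_sub_le (hs : IsAtomProfile k s) {i j : ℕ} (hi : 1 ≤ i) (hij : i ≤ j) (hjk : j ≤ k) :
    s i + (j - i) ≤ s j := by
  induction j, hij using Nat.le_induction with
  | base => simp
  | succ j hij ih =>
    have := (hs.growth j (hi.trans hij) hjk).1
    have := ih (by omega)
    omega

theorem le_apply (hs : IsAtomProfile k s) {j : ℕ} (hj : 1 ≤ j) (hjk : j ≤ k) : j ≤ s j := by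
  have := hs.add_sub_le le_rfl hj hjk
  rw [hs.one] at this
  omega

theorem mul_pred_le_two_mul_sum (hs : IsAtomProfile k s) {m : ℕ} (hm : 1 ≤ m) (hmk : m ≤ k) :
    (m : ℝ) * (m - 1) ≤ 2 * ∑ j ∈ Ico 1 m, (s j : ℝ) := by
  have hgauss : (m : ℝ) * (m - 1) = 2 * ∑ j ∈ Ico 1 m, (j : ℝ) := by
    rw [← Nat.cast_one, ← Nat.cast_sub hm, ← Nat.cast_mul, ← sum_range_id_mul_two,
      range_eq_Ico, sum_eq_sum_Ico_succ_bot (by omega)]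
    push_cast
    ring
  rw [hgauss]
  gcongr with j hj
  rw [mem_Ico] at hj
  exact_mod_cast hs.le_apply hj.1 (by omega)

theorem sub_mul_le_sum (hs : IsAtomProfile k s) {m : ℕ} (hm : 1 ≤ m) (hmk : m ≤ k) :
    ((k : ℝ) - m) * s m ≤ ∑ j ∈ Ico 1 k, (s j : ℝ) :=
  calc ((k : ℝ) - m) * s m = ∑ j ∈ Ico m k, (s m : ℝ) := by simp [Nat.cast_sub hmk]
    _ ≤ ∑ j ∈ Ico m k, (s j : ℝ) := by
      gcongr with j hj
      rw [mem_Ico] at hj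
      have := hs.add_sub_le hm hj.1 hj.2.le
      omega
    _ ≤ ∑ j ∈ Ico 1 k, (s j : ℝ) :=
      sum_le_sum_of_subset_of_nonneg (Ico_subset_Ico_left hm) fun _ _ _ => by positivity

theorem exists_last_le (hs : IsAtomProfile k s) (hk : 1 ≤ k) {T : ℝ} (hT : 1 ≤ T) :
    ∃ m, 1 ≤ m ∧ m ≤ k ∧ (s m : ℝ) ≤ T ∧ (m < k → T < 2 * s m) := by
  classical
  have h1 : (s 1 : ℝ) ≤ T := by rw [hs.one]; exact_mod_cast hT
  set P : ℕ → Prop := fun j => (s j : ℝ) ≤ T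
  set m := Nat.findGreatest P k
  have hm1 : 1 ≤ m := Nat.le_findGreatest hk h1
  refine ⟨m, hm1, Nat.findGreatest_le k, Nat.findGreatest_spec (P := P) hk h1, fun hmk => ?_⟩
  have hnext : ¬ (s (m + 1) : ℝ) ≤ T := Nat.findGreatest_is_greatest (Nat.lt_succ_self m) hmk
  have hdouble : (s (m + 1) : ℝ) ≤ 2 * s m := by exact_mod_cast (hs.growth m hm1 hmk).2
  linarith [not_le.mp hnext]

theorem lower_bound (hs : IsAtomProfile k s) (hk : 1 ≤ k) {μ : ℝ}
    (hμ : ∀ m, 1 ≤ m → m ≤ k → 2 * ∑ j ∈ Ico 1 m, (s j : ℝ) ≤ μ * s m) :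
    k * √k / (4 * √(s k)) - 2 ≤ μ := by
  set n := s k
  have hk1 : (1 : ℝ) ≤ k := by exact_mod_cast hk
  have hkn : (k : ℝ) ≤ n := by exact_mod_cast hs.le_apply hk le_rfl
  have hsqk : √(k : ℝ) ^ 2 = k := Real.sq_sqrt (by positivity)
  have hsqn : √(n : ℝ) ^ 2 = n := Real.sq_sqrt (by positivity)
  have hn0 : 0 < √(n : ℝ) := Real.sqrt_pos.mpr (by linarith)
  obtain ⟨T, hT⟩ : ∃ T, T = √n * √k := ⟨_, rfl⟩
  have hTk : (k : ℝ) ≤ T := by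
    calc (k : ℝ) = √k * √k := by rw [← sq, hsqk]
      _ ≤ √n * √k := mul_le_mul_of_nonneg_right (Real.sqrt_le_sqrt hkn) (Real.sqrt_nonneg k)
      _ = T := hT.symm
  have hμ0 : 0 ≤ μ := by simpa [hs.one] using hμ 1 le_rfl hk
  obtain ⟨m, hm1, hmk, hmT, hTm⟩ := hs.exists_last_le hk (hk1.trans hTk)
  by_cases hlarge : 3 * (k : ℝ) ≤ 4 * m
  · have hsmall : (m : ℝ) * (m - 1) ≤ μ * T :=
      (hs.mul_pred_le_two_mul_sum hm1 hmk).trans <| (hμ m hm1 hmk).trans (by gcongr)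
    have hq : k * √k / (4 * √n) = k ^ 2 / (4 * T) := by
      rw [div_eq_div_iff (by positivity) (by nlinarith)]
      linear_combination (4 * k * √n) * hsqk + (4 * k * √k) * hT
    rw [hq, sub_le_iff_le_add, div_le_iff₀ (by linarith)]
    nlinarith
  · have hmk : m < k := by
      have : (m : ℝ) < k := by linarith
      exact_mod_cast this
    have hbig : (k - m) * T ≤ μ * n := by
      have := hs.sub_mul_le_sum hm1 hmk.le
      nlinarith [hTm hmk, hμ k hk le_rfl]
    have hq : k * √k / (4 * √n) = k * T / (4 * n) := by
      rw [div_eq_div_iff (by positivity) (by nlinarith)]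
      linear_combination (-4 * k * √k) * hsqn - (4 * k * √n) * hT
    suffices k * T / (4 * n) ≤ μ by linarith
    rw [div_le_iff₀ (by nlinarith)]
    nlinarith

end IsAtomProfile

theorem IsKAtom.one_le {k : ℕ} {V : Type} {G : SimpleGraph V} (h : IsKAtom k G) : 1 ≤ k := by
  induction h <;> omega

/-- `S j` stands for the vertex set of the `j`-atom `A_j` of the recursive construction
`A_1 ⊂ A_2 ⊂ ⋯ ⊂ A_k = G`; only the facts needed for the spectral bound are recorded. -/
structure IsAtomChain {V : Type*} [Fintype V] (G : SimpleGraph V) [DecidableRel G.Adj] (k : ℕ)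
    (S : ℕ → Finset V) : Prop where
  top : S k = univ
  profile : IsAtomProfile k fun j => #(S j)
  two_mul_sum_le : ∀ m, 1 ≤ m → m ≤ k → 2 * ∑ j ∈ Ico 1 m, #(S j) ≤ #(G.interedges (S m) (S m))

namespace IsAtomChain

variable {V : Type*} [Fintype V] {G : SimpleGraph V} [DecidableRel G.Adj]

theorem const_univ (hV : Fintype.card V = 1) : IsAtomChain G 1 fun _ => univ where
  top := rfl
  profile := ⟨by simpa using hV, by omega⟩
  two_mul_sum_le m hm hmk := by simp [show m = 1 by omega]

theorem extend {A : Set V} [Fintype A] [DecidableRel (G.induce A).Adj] {k : ℕ}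
    {SA : ℕ → Finset A} (hSA : IsAtomChain (G.induce A) k SA) (hk : 1 ≤ k)
    (hone : ∀ a ∈ A, ∃! b, b ∉ A ∧ G.Adj a b) (hcov : ∀ b ∉ A, ∃ a ∈ A, G.Adj a b) :
    IsAtomChain G (k + 1) fun j =>
      if j ≤ k then (SA j).map (SimpleGraph.Embedding.induce A (G := G)).toEmbedding else univ := by
  classical
  set e := (SimpleGraph.Embedding.induce A (G := G)).toEmbedding
  have card_interedges_map (t : Finset A) :
      #(G.interedges (t.map e) (t.map e)) = #((G.induce A).interedges t t) :=
    (SimpleGraph.Embedding.induce A).card_interedges_map t t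
  set s := (SA k).map e
  have hmem : ∀ v, v ∈ s ↔ v ∈ A := fun v => by simp [s, e, hSA.top]
  have hone' : ∀ a ∈ s, ∃! b, b ∉ s ∧ G.Adj a b := by simpa only [hmem] using hone
  have hcov' : ∀ b ∉ s, ∃ a ∈ s, G.Adj a b := by simpa only [hmem] using hcov
  have hs : s.Nonempty := by
    rw [← card_pos, card_map]
    exact Nat.lt_of_lt_of_le hk (hSA.profile.le_apply hk le_rfl)
  obtain ⟨hlt, hle⟩ := G.card_lt_card_univ_le_two_mul hs hone' hcov'
  rw [card_map] at hlt hle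
  set S : ℕ → Finset V := fun j => if j ≤ k then (SA j).map e else univ
  have hcard : (fun j => #(S j)) = fun j => if j ≤ k then #(SA j) else Fintype.card V := by
    ext j
    split_ifs <;> simp [S, *]
  refine ⟨by simp [S], hcard ▸ hSA.profile.extend hk hlt hle, fun m hm hmk => ?_⟩
  have hsum : ∑ j ∈ Ico 1 m, #(S j) = ∑ j ∈ Ico 1 m, #(SA j) :=
    sum_congr rfl fun j hj => by rw [mem_Ico] at hj; simp [S, show j ≤ k by omega]
  rw [hsum]
  rcases hmk.lt_or_eq with hmk | rfl
  · rw [Nat.lt_succ_iff] at hmk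
    rw [show S m = (SA m).map e from if_pos hmk]
    exact (hSA.two_mul_sum_le m hm hmk).trans_eq (card_interedges_map _).symm
  · have hA : 2 * ∑ j ∈ Ico 1 k, #(SA j) ≤ #(G.interedges s s) :=
      (hSA.two_mul_sum_le k hk le_rfl).trans_eq (card_interedges_map _).symm
    have hG := G.card_interedges_add_two_mul_card_le fun a ha => (hone' a ha).exists
    rw [sum_Ico_succ_top hk, show S (k + 1) = univ by simp [S]]
    have : #s = #(SA k) := card_map _
    omega

end IsAtomChain

-- The instances are bound after the colon so that the induction generalizes over them.
theorem IsKAtom.exists_isAtomChain {k : ℕ} {V : Type} {G : SimpleGraph V} (h : IsKAtom k G) :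
    ∀ [Fintype V] [DecidableRel G.Adj], ∃ S, IsAtomChain G k S := by
  induction h with
  | base G hne hsub =>
    intros
    exact ⟨_, .const_univ (le_antisymm (Fintype.card_le_one_iff_subsingleton.mpr hsub)
      (Fintype.card_pos_iff.mpr hne))⟩
  | step G k A hA _ hone hcov ih =>
    intros
    classical
    obtain ⟨SA, hSA⟩ := ih
    exact ⟨_, hSA.extend hA.one_le hone hcov⟩

/-- Every `k`-atom on `n` vertices satisfies `λ₁ ≥ k √k / (4 √n) - 2`. -/
theorem lambda1_atom_lower_bound (k : ℕ) {V : Type} [Fintype V]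
    (G : SimpleGraph V) (h : IsKAtom k G) :
    (k : ℝ) * Real.sqrt k / (4 * Real.sqrt (Fintype.card V)) - 2 ≤ lambda1 G := by
  classical
  obtain ⟨S, hS⟩ := h.exists_isAtomChain
  have := hS.profile.lower_bound h.one_le (μ := lambda1 G) fun m hm hmk =>
    le_trans (by exact_mod_cast hS.two_mul_sum_le m hm hmk) (G.card_interedges_le_lambda1 (S m))
  simpa [hS.top] using this
end
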